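/- arXiv:2511.08879 — 8 statements merged into one kernel-verified Lean document; each statement's English description precedes it below -/
import Mathlib

section
/- Let n ≥ 3 and let μ = (μ₁,…,μₙ) ∈ ℤⁿ be weakly decreasing. Set Pⱼ := μ₁+⋯+μⱼ and T := Pₙ, and define D(μ) as the maximum of the finite set consisting of the numbers Pᵢ + P_{n−i} − T for 1 ≤ i ≤ ⌊(n−1)/2⌋, together with the number P_{n/2} − T/2 when n is even. Then D(μ) ≤ 1 or D(μ) ≥ 2; that is, D(μ) never lies strictly between 1 and 2. -/
/-- Sum of the first `j` entries of a vector indexed by `Fin n` (the value `Pⱼ`). -/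
def psum {n : ℕ} (μ : Fin n → ℤ) (j : ℕ) : ℤ :=
  ∑ i ∈ Finset.univ.filter (fun i : Fin n => (i : ℕ) < j), μ i

/-- The depth `D(μ)` of a weakly decreasing `μ ∈ ℤⁿ` for the quasi-split non-split
outer form of type `A_{n-1}`: the maximum of the numbers `Pᵢ + P_{n−i} − T` for
`1 ≤ i ≤ ⌊(n−1)/2⌋`, together with `P_{n/2} − T/2` when `n` is even. -/
def Dqs {n : ℕ} (μ : Fin n → ℤ) : ℚ :=
  if h : (Finset.Icc 1 ((n - 1) / 2)).Nonempty then
    if n % 2 = 0 then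
      max
        ((Finset.Icc 1 ((n - 1) / 2)).sup' h fun i : ℕ =>
          ((psum μ i : ℚ) + (psum μ (n - i) : ℚ) - (psum μ n : ℚ)))
        ((psum μ (n / 2) : ℚ) - (psum μ n : ℚ) / 2)
    else
      (Finset.Icc 1 ((n - 1) / 2)).sup' h fun i : ℕ =>
        ((psum μ i : ℚ) + (psum μ (n - i) : ℚ) - (psum μ n : ℚ))
  else 0

/-!
All the numbers `Pᵢ + P_{n−i} − T` are integers, so `D(μ)` can only fall strictly between
`1` and `2` when `n = 2m` and the extra term is `(2Pₘ − T)/2 = 3/2` while every integer term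
is at most `1`. Since `μ` decreases, `Pₘ ≥ m μₘ` and `T − Pₘ ≤ m μ_{m+1}`, so the middle gap
`g = μₘ − μ_{m+1}` satisfies `m g ≤ 2Pₘ − T = 3`, forcing `g ≤ 1` as `m ≥ 2`. Then the
integer term for `i = m − 1`, which equals `2Pₘ − T − g`, is at least `2`.
-/

section PartialSums

variable {n : ℕ} (μ : Fin n → ℤ)

lemma psum_zero : psum μ 0 = 0 := by
  simp [psum]

lemma psum_succ {j : ℕ} (hj : j < n) : psum μ (j + 1) = psum μ j + μ ⟨j, hj⟩ := by
  have hfilter : (Finset.univ.filter fun i : Fin n => (i : ℕ) < j + 1)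
      = insert ⟨j, hj⟩ (Finset.univ.filter fun i : Fin n => (i : ℕ) < j) := by
    ext i
    simp only [Finset.mem_filter, Finset.mem_univ, true_and, Finset.mem_insert, Fin.ext_iff]
    omega
  rw [psum, hfilter, Finset.sum_insert (by simp), add_comm]
  rfl

variable {μ}

lemma mul_le_psum (hμ : Antitone μ) {k : ℕ} {t : Fin n} (hkt : k ≤ (t : ℕ) + 1) :
    (k : ℤ) * μ t ≤ psum μ k := by
  induction k with
  | zero => simp [psum_zero]
  | succ k ih =>
    rw [psum_succ μ (by omega)]
    have hle : μ t ≤ μ ⟨k, by omega⟩ := hμ (Fin.le_def.mpr (by simp; omega))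
    push_cast
    linarith [ih (by omega)]

lemma psum_add_le (hμ : Antitone μ) {m k : ℕ} (hmk : m + k ≤ n) {t : Fin n}
    (htm : (t : ℕ) ≤ m) : psum μ (m + k) ≤ psum μ m + (k : ℤ) * μ t := by
  induction k with
  | zero => simp
  | succ k ih =>
    rw [← add_assoc, psum_succ μ (by omega)]
    have hle : μ ⟨m + k, by omega⟩ ≤ μ t := hμ (Fin.le_def.mpr (by simp; omega))
    push_cast
    linarith [ih (by omega)]

end PartialSums

section MiddleGap

variable {n m : ℕ} {μ : Fin n → ℤ}

lemma mul_middle_gap_le (hμ : Antitone μ) (hnm : n = m + m) (hm : 0 < m) :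
    (m : ℤ) * (μ ⟨m - 1, by omega⟩ - μ ⟨m, by omega⟩) ≤ 2 * psum μ m - psum μ n := by
  have hlower := mul_le_psum hμ (k := m) (t := ⟨m - 1, by omega⟩) (by simp; omega)
  have hupper := psum_add_le hμ (m := m) (k := m) (by omega) (t := ⟨m, by omega⟩) le_rfl
  rw [← hnm] at hupper
  linarith

lemma two_le_depth_term_pred (hμ : Antitone μ) (hnm : n = m + m) (hm : 2 ≤ m)
    (h : 2 * psum μ m - psum μ n = 3) :
    2 ≤ psum μ (m - 1) + psum μ (n - (m - 1)) - psum μ n := by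
  have hpred : psum μ m = psum μ (m - 1) + μ ⟨m - 1, by omega⟩ := by
    rw [← psum_succ μ (by omega)]
    congr 1
    omega
  have hsucc : psum μ (n - (m - 1)) = psum μ m + μ ⟨m, by omega⟩ := by
    rw [← psum_succ μ (by omega)]
    congr 1
    omega
  have hgap := mul_middle_gap_le hμ hnm (by omega)
  have hgap_le_one : μ ⟨m - 1, by omega⟩ - μ ⟨m, by omega⟩ ≤ 1 := by
    by_contra! hbig
    have hm' : (2 : ℤ) ≤ m := by exact_mod_cast hm
    nlinarith
  linarith

end MiddleGap

lemma Int.cast_le_one_or_two_le (a : ℤ) : (a : ℚ) ≤ 1 ∨ 2 ≤ (a : ℚ) := by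
  rcases le_or_gt a 1 with h | h
  · exact Or.inl (by exact_mod_cast h)
  · exact Or.inr (by exact_mod_cast h)

lemma max_cast_half_le_one_or_two_le {a b : ℤ} (h : a ≤ 1 → b ≠ 3) :
    max (a : ℚ) (b / 2) ≤ 1 ∨ 2 ≤ max (a : ℚ) (b / 2) := by
  rcases le_or_gt a 1 with ha | ha
  · rcases le_or_gt b 2 with hb | hb
    · left
      refine max_le (by exact_mod_cast ha) ?_
      rw [div_le_one two_pos]
      exact_mod_cast hb
    · right
      refine le_max_of_le_right ?_
      rw [le_div_iff₀ two_pos]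
      have hb4 : (2 * 2 : ℤ) ≤ b := by have := h ha; omega
      exact_mod_cast hb4
  · exact Or.inr (le_max_of_le_left (by exact_mod_cast ha))

theorem stmt2 (n : ℕ) (hn : 3 ≤ n) (μ : Fin n → ℤ) (hμ : Antitone μ) :
    Dqs μ ≤ 1 ∨ 2 ≤ Dqs μ := by
  have hne : (Finset.Icc 1 ((n - 1) / 2)).Nonempty :=
    ⟨1, Finset.mem_Icc.mpr ⟨le_rfl, by omega⟩⟩
  set term : ℕ → ℤ := fun i => psum μ i + psum μ (n - i) - psum μ n
  have hcast : ((Finset.Icc 1 ((n - 1) / 2)).sup' hne fun i : ℕ =>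
      ((psum μ i : ℚ) + (psum μ (n - i) : ℚ) - (psum μ n : ℚ))) =
      (((Finset.Icc 1 ((n - 1) / 2)).sup' hne term : ℤ) : ℚ) := by
    rw [Finset.apply_sup'_eq_sup'_comp hne _ fun x y => Int.cast_max]
    simp [term]
  rw [Dqs, dif_pos hne, hcast]
  split_ifs with hpar
  · obtain ⟨m, hnm⟩ : ∃ m, n = m + m := ⟨n / 2, by omega⟩
    have hhalf : (psum μ (n / 2) : ℚ) - (psum μ n : ℚ) / 2 =
        ((2 * psum μ m - psum μ n : ℤ) : ℚ) / 2 := by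
      rw [show n / 2 = m by omega]
      push_cast
      ring
    rw [hhalf]
    refine max_cast_half_le_one_or_two_le fun hsup h3 => ?_
    have hmem : m - 1 ∈ Finset.Icc 1 ((n - 1) / 2) := Finset.mem_Icc.mpr ⟨by omega, by omega⟩
    have hle := Finset.le_sup' term hmem
    linarith [two_le_depth_term_pred hμ hnm (by omega) h3]
  · exact Int.cast_le_one_or_two_le _
end

section
/- Let n ≥ 1, let n₁,…,n_r be positive integers with n₁+⋯+n_r = n, partitioning {1,…,n} into consecutive blocks B₁,…,B_r, and let μ ∈ ℚⁿ be weakly decreasing on each block Bₖ. For each k, writing (ν₁,…,ν_{nₖ}) for the restriction of μ to Bₖ, set dₖ := max over 1 ≤ j ≤ nₖ−1 of (ν₁+⋯+νⱼ) − (j/nₖ)(ν₁+⋯+ν_{nₖ}) (with dₖ := 0 if nₖ = 1). Let σ be the weakly decreasing rearrangement of μ and set depth_G(μ) := max over 1 ≤ j ≤ n−1 of (σ₁+⋯+σⱼ) − (j/n)(σ₁+⋯+σₙ) (with depth_G(μ) := 0 if n = 1). Then max(0, d₁, …, d_r) ≤ depth_G(μ). -/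
/-- Sum of the `j` entries of `μ` in positions `o, o+1, …, o+j-1` (0-indexed):
the `j`-th partial sum of the block of `μ` starting at offset `o`. -/
def blockPsum {n : ℕ} (μ : Fin n → ℚ) (o j : ℕ) : ℚ :=
  ∑ i ∈ Finset.univ.filter (fun i : Fin n => o ≤ (i : ℕ) ∧ (i : ℕ) < o + j), μ i

/-- The depth of the block of `μ` of length `m` starting at offset `o`:
`max_{1 ≤ j ≤ m−1} (ν₁+⋯+νⱼ) − (j/m)(ν₁+⋯+ν_m)`, with value `0` if `m ≤ 1`. -/
def blockDepth {n : ℕ} (μ : Fin n → ℚ) (o m : ℕ) : ℚ :=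
  if h : (Finset.Icc 1 (m - 1)).Nonempty then
    (Finset.Icc 1 (m - 1)).sup' h fun j : ℕ =>
      blockPsum μ o j - (j : ℚ) / (m : ℚ) * blockPsum μ o m
  else 0

/-- Offset of the `k`-th block: `n₁ + ⋯ + n_{k-1}`. -/
def offs {r : ℕ} (ns : Fin r → ℕ) (k : Fin r) : ℕ :=
  ∑ l ∈ Finset.univ.filter (fun l : Fin r => l < k), ns l

/-!
For antitone `σ`, among all index sets of a given size the initial segment carries the largest
sum, so `blockDepth σ 0 n` bounds `excessOn μ X = ∑_{X} μ - (#X/n) ∑ μ` for every `X`. A block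
term `ν₁+⋯+νⱼ - (j/m)(ν₁+⋯+νₘ)` is the linear form `c ↦ ∑ cᵢ (μᵢ - mean μ)` evaluated at the
weights `1` on the first `j` entries of the block, `0` on the rest of the block and `j/m` outside
it. These weights are a convex combination of two indicator vectors, so the term is bounded by
an excess, hence by the depth of `σ`.
-/

open Finset

theorem Antitone.sum_le_sum_filter_val_lt_card {β : Type*} [AddCommMonoid β] [LinearOrder β]
    [IsOrderedAddMonoid β] {n : ℕ} {σ : Fin n → β} (hσ : Antitone σ) (B : Finset (Fin n)) :
    ∑ i ∈ B, σ i ≤ ∑ i : Fin n with i.val < #B, σ i := by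
  set I : Finset (Fin n) := {i | i.val < #B}
  have hcard : #(B \ I) = #(I \ B) := by
    refine card_sdiff_comm ?_
    simpa [I, Fin.card_filter_val_lt, eq_comm] using card_le_univ B
  have hexchange : ∑ i ∈ B \ I, σ i ≤ ∑ i ∈ I \ B, σ i := by
    obtain hempty | hne := (B \ I).eq_empty_or_nonempty
    · rw [hempty, card_empty, eq_comm, card_eq_zero] at hcard
      rw [hempty, hcard]
    obtain ⟨b, hb, hbmax⟩ := exists_max_image _ σ hne
    calc ∑ i ∈ B \ I, σ i ≤ #(B \ I) • σ b := sum_le_card_nsmul _ _ _ hbmax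
      _ = #(I \ B) • σ b := by rw [hcard]
      _ ≤ ∑ i ∈ I \ B, σ i := card_nsmul_le_sum _ _ _ fun a ha => hσ ?_
    simp only [I, mem_sdiff, mem_filter, mem_univ, true_and, not_lt] at ha hb
    exact Fin.le_def.mpr (by omega)
  rw [← sum_inter_add_sum_sdiff B I, ← sum_inter_add_sum_sdiff I B, inter_comm]
  exact add_le_add_right hexchange _

def excessOn {ι : Type*} [Fintype ι] (μ : ι → ℚ) (X : Finset ι) : ℚ :=
  ∑ i ∈ X, μ i - #X / Fintype.card ι * ∑ i, μ i

@[simp]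
theorem excessOn_empty {ι : Type*} [Fintype ι] (μ : ι → ℚ) : excessOn μ ∅ = 0 := by
  simp [excessOn]

theorem excessOn_map_equiv {ι κ : Type*} [Fintype ι] [Fintype κ] (μ : κ → ℚ) (e : ι ≃ κ)
    (X : Finset ι) : excessOn μ (X.map e.toEmbedding) = excessOn (μ ∘ e) X := by
  simp [excessOn, e.sum_comp, Fintype.card_congr e]

/-- With `t = #S / #B`, the weights `1_S + t • 1_{Bᶜ}` equal `(1 - t) • 1_S + t • 1_{S ∪ Bᶜ}`. -/
theorem sum_sub_mul_sum_eq_excessOn_combo {ι : Type*} [Fintype ι] [DecidableEq ι]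
    (μ : ι → ℚ) {S B : Finset ι} (hSB : S ⊆ B) (hB : B.Nonempty) :
    ∑ i ∈ S, μ i - #S / #B * ∑ i ∈ B, μ i =
      (1 - #S / #B) * excessOn μ S + #S / #B * excessOn μ (S ∪ Bᶜ) := by
  have hdisj : Disjoint S Bᶜ := disjoint_compl_right.mono_left hSB
  have hB0 : (#B : ℚ) ≠ 0 := by exact_mod_cast hB.card_pos.ne'
  have hι : (Fintype.card ι : ℚ) ≠ 0 := by
    exact_mod_cast (hB.card_pos.trans_le (card_le_univ B)).ne'
  have hsum := sum_add_sum_compl B μ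
  have hcard : (#Bᶜ : ℚ) = Fintype.card ι - #B := by
    rw [card_compl, Nat.cast_sub (card_le_univ B)]
  simp only [excessOn, sum_union hdisj, card_union_of_disjoint hdisj, Nat.cast_add, hcard]
  field_simp
  linear_combination (-(#S : ℚ) * Fintype.card ι) * hsum

theorem sum_sub_mul_sum_le_of_forall_excessOn_le {ι : Type*} [Fintype ι] [DecidableEq ι]
    {μ : ι → ℚ} {D : ℚ} (h : ∀ X, excessOn μ X ≤ D) {S B : Finset ι} (hSB : S ⊆ B)
    (hB : B.Nonempty) : ∑ i ∈ S, μ i - #S / #B * ∑ i ∈ B, μ i ≤ D := by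
  have ht : (#S : ℚ) / #B ≤ 1 :=
    div_le_one_of_le₀ (by exact_mod_cast card_le_card hSB) (Nat.cast_nonneg _)
  rw [sum_sub_mul_sum_eq_excessOn_combo μ hSB hB]
  exact (Convex.combo_le_max _ _ (sub_nonneg.mpr ht) (by positivity) (by ring)).trans
    (max_le (h _) (h _))

theorem card_filter_le_val_lt {n : ℕ} (o j : ℕ) (h : o + j ≤ n) :
    #{i : Fin n | o ≤ i.val ∧ i.val < o + j} = j := by
  have hsplit : univ.filter (fun i : Fin n => o ≤ i.val ∧ i.val < o + j) =
      univ.filter (fun i : Fin n => i.val < o + j) \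
        univ.filter (fun i : Fin n => i.val < o) := by
    ext i; simp only [mem_filter, mem_sdiff, mem_univ, true_and, not_lt]; omega
  rw [hsplit, card_sdiff_of_subset (fun i => by simp only [mem_filter, mem_univ, true_and]; omega),
    Fin.card_filter_val_lt, Fin.card_filter_val_lt]
  omega

theorem blockDepth_le_of_forall_excessOn_le {n : ℕ} {μ : Fin n → ℚ} {o m : ℕ} {D : ℚ}
    (hom : o + m ≤ n) (h : ∀ X, excessOn μ X ≤ D) : blockDepth μ o m ≤ D := by
  unfold blockDepth
  split_ifs with hne
  · refine sup'_le _ _ fun j hj => ?_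
    have hjm : 1 ≤ j ∧ j ≤ m := by simp only [mem_Icc] at hj; omega
    have hterm := sum_sub_mul_sum_le_of_forall_excessOn_le h
      (S := {i : Fin n | o ≤ i.val ∧ i.val < o + j})
      (B := {i : Fin n | o ≤ i.val ∧ i.val < o + m})
      (fun i => by simp only [mem_filter, mem_univ, true_and]; omega)
      (card_pos.mp (by rw [card_filter_le_val_lt o m hom]; omega))
    rwa [card_filter_le_val_lt o j (by omega), card_filter_le_val_lt o m hom] at hterm
  · simpa using h ∅

theorem blockPsum_sub_le_blockDepth {n : ℕ} (μ : Fin n → ℚ) {o m j : ℕ}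
    (hj : j ∈ Icc 1 (m - 1)) :
    blockPsum μ o j - j / m * blockPsum μ o m ≤ blockDepth μ o m := by
  rw [blockDepth, dif_pos ⟨j, hj⟩]
  exact le_sup' (fun j : ℕ => blockPsum μ o j - j / m * blockPsum μ o m) hj

theorem blockPsum_zero_left {n : ℕ} (μ : Fin n → ℚ) (s : ℕ) :
    blockPsum μ 0 s = ∑ i : Fin n with i.val < s, μ i := by
  simp [blockPsum]

theorem blockPsum_zero_self {n : ℕ} (μ : Fin n → ℚ) : blockPsum μ 0 n = ∑ i, μ i := by
  simp [blockPsum_zero_left]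

theorem Antitone.blockDepth_nonneg {n : ℕ} {σ : Fin n → ℚ} (hσ : Antitone σ) :
    0 ≤ blockDepth σ 0 n := by
  rcases lt_or_ge n 2 with hn | hn
  · rw [blockDepth, dif_neg (by simp only [nonempty_Icc]; omega)]
  have h1 : 1 ∈ Icc 1 (n - 1) := mem_Icc.mpr ⟨le_rfl, by omega⟩
  refine le_trans ?_ (blockPsum_sub_le_blockDepth σ h1)
  let i₀ : Fin n := ⟨0, by omega⟩
  have hfirst : blockPsum σ 0 1 = σ i₀ := by
    rw [blockPsum_zero_left, sum_eq_single_of_mem i₀ (by simp [i₀])]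
    intro i hi hne
    simp only [mem_filter, mem_univ, true_and] at hi
    exact absurd (Fin.ext (Nat.lt_one_iff.mp hi)) hne
  have hsum : ∑ i, σ i ≤ n * σ i₀ := by
    simpa using sum_le_card_nsmul univ σ (σ i₀) fun i _ => hσ (Fin.le_def.mpr (Nat.zero_le _))
  rw [hfirst, blockPsum_zero_self, sub_nonneg, div_mul_eq_mul_div,
    div_le_iff₀ (by positivity)]
  push_cast
  linarith

theorem Antitone.excessOn_le_blockDepth {n : ℕ} {σ : Fin n → ℚ} (hσ : Antitone σ)
    (X : Finset (Fin n)) : excessOn σ X ≤ blockDepth σ 0 n := by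
  have htop : excessOn σ X ≤ blockPsum σ 0 #X - #X / n * blockPsum σ 0 n := by
    rw [excessOn, blockPsum_zero_left, blockPsum_zero_self, Fintype.card_fin]
    exact sub_le_sub_right (hσ.sum_le_sum_filter_val_lt_card X) _
  refine htop.trans ?_
  obtain hX | ⟨hn, hX⟩ | hX : #X = 0 ∨ (n ≠ 0 ∧ #X = n) ∨ #X ∈ Icc 1 (n - 1) := by
    have := card_le_univ X; simp only [Fintype.card_fin] at this; simp only [mem_Icc]; omega
  · simpa [hX, blockPsum] using hσ.blockDepth_nonneg
  · simpa [hX, hn] using hσ.blockDepth_nonneg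
  · exact blockPsum_sub_le_blockDepth σ hX

theorem offs_add_le_sum {r : ℕ} (ns : Fin r → ℕ) (k : Fin r) : offs ns k + ns k ≤ ∑ l, ns l := by
  rw [offs, add_comm, ← sum_insert (by simp)]
  exact sum_le_sum_of_subset (subset_univ _)

theorem stmt4_general (n r : ℕ) (ns : Fin r → ℕ)
    (hsum : ∑ k, ns k = n) (μ : Fin n → ℚ)
    (σ : Fin n → ℚ) (π : Equiv.Perm (Fin n))
    (hσ : ∀ i, σ i = μ (π i)) (hanti : Antitone σ) :
    0 ≤ blockDepth σ 0 n ∧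
      ∀ k : Fin r, blockDepth μ (offs ns k) (ns k) ≤ blockDepth σ 0 n := by
  refine ⟨hanti.blockDepth_nonneg, fun k => ?_⟩
  refine blockDepth_le_of_forall_excessOn_le (hsum ▸ offs_add_le_sum ns k) fun X => ?_
  have hX : X = (X.map π.symm.toEmbedding).map π.toEmbedding := by simp [map_map]
  rw [hX, excessOn_map_equiv, show μ ∘ π = σ from (funext hσ).symm]
  exact hanti.excessOn_le_blockDepth _

theorem stmt4 (n r : ℕ) (hn : 1 ≤ n) (ns : Fin r → ℕ) (hpos : ∀ k, 0 < ns k)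
    (hsum : ∑ k, ns k = n) (μ : Fin n → ℚ)
    (hblocks : ∀ k : Fin r, ∀ i j : Fin n,
      offs ns k ≤ (i : ℕ) → i ≤ j → (j : ℕ) < offs ns k + ns k → μ j ≤ μ i)
    (σ : Fin n → ℚ) (π : Equiv.Perm (Fin n))
    (hσ : ∀ i, σ i = μ (π i)) (hanti : Antitone σ) :
    0 ≤ blockDepth σ 0 n ∧
      ∀ k : Fin r, blockDepth μ (offs ns k) (ns k) ≤ blockDepth σ 0 n :=
  stmt4_general n r ns hsum μ σ π hσ hanti
end

section
/- Let n ≥ 2, let 1 ≤ c ≤ n−1, and let μ ∈ ℚⁿ be weakly decreasing on {1,…,c} and on {c+1,…,n}. Let d₁ := max over 1 ≤ j ≤ c−1 of (μ₁+⋯+μⱼ) − (j/c)(μ₁+⋯+μ_c) (d₁ := 0 if c = 1), let d₂ := max over 1 ≤ j ≤ n−c−1 of (μ_{c+1}+⋯+μ_{c+j}) − (j/(n−c))(μ_{c+1}+⋯+μₙ) (d₂ := 0 if c = n−1), and let depth_G(μ) := max over 1 ≤ j ≤ n−1 of (σ₁+⋯+σⱼ) − (j/n)(σ₁+⋯+σₙ),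 where σ is the weakly decreasing rearrangement of μ. Then max(d₁,d₂) = depth_G(μ) holds if and only if both of the following conditions hold: (1) (μ₁+⋯+μ_c)/c = (μ_{c+1}+⋯+μₙ)/(n−c), and (2) μ is constant on {1,…,c} or μ is constant on {c+1,…,n}. -/
/-!
Write `n = c + m`. The decreasing rearrangement `σ` merges the two decreasing blocks of `μ`, so
each partial sum of `σ` is the largest sum `P₁(j₁) + P₂(j₂)` of initial segments of the blocks with
`j₁ + j₂ = j`. Hence the depth of `σ` is the maximum over `(j₁, j₂)` of
`t₁(j₁) + t₂(j₂) + (a₁ - a₂)(j₁ m - j₂ c)/n`, where the `tᵢ` are the terms defining the block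
depths and the `aᵢ` are the block means. If `a₁ ≠ a₂`, pairing a maximiser for one block with the
empty or the full other block makes the last summand positive. If `a₁ = a₂`, the depth of `σ` is
the largest `t₁(j₁) + t₂(j₂)`, which exceeds both block depths exactly when both are positive,
i.e. when neither block is constant.
-/

open Finset

def blockSet (n o j : ℕ) : Finset (Fin n) :=
  univ.filter fun i : Fin n => o ≤ (i : ℕ) ∧ (i : ℕ) < o + j

section Block

variable {n : ℕ}

@[simp]
lemma mem_blockSet {o j : ℕ} {i : Fin n} :
    i ∈ blockSet n o j ↔ o ≤ (i : ℕ) ∧ (i : ℕ) < o + j := by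
  simp [blockSet]

lemma blockPsum_eq_sum_blockSet (μ : Fin n → ℚ) (o j : ℕ) :
    blockPsum μ o j = ∑ i ∈ blockSet n o j, μ i := rfl

lemma card_blockSet {o j : ℕ} (h : o + j ≤ n) : #(blockSet n o j) = j := by
  have : (blockSet n o j).map Fin.valEmbedding = Ico o (o + j) := by
    ext k
    simp only [mem_map, mem_blockSet, Fin.valEmbedding_apply, mem_Ico]
    exact ⟨fun ⟨i, hi, hik⟩ => hik ▸ hi, fun hk => ⟨⟨k, by omega⟩, hk, rfl⟩⟩
  rw [← card_map, this, Nat.card_Ico, Nat.add_sub_cancel_left]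

lemma blockSet_mono {o j k : ℕ} (h : j ≤ k) : blockSet n o j ⊆ blockSet n o k := by
  intro i; simp only [mem_blockSet]; omega

lemma blockPsum_zero (μ : Fin n → ℚ) (o : ℕ) : blockPsum μ o 0 = 0 := by
  rw [blockPsum_eq_sum_blockSet, sum_eq_zero]
  intro i hi; simp only [mem_blockSet] at hi; omega

lemma blockPsum_succ (μ : Fin n → ℚ) {o j : ℕ} (h : o + j < n) :
    blockPsum μ o (j + 1) = blockPsum μ o j + μ ⟨o + j, h⟩ := by
  have : blockSet n o (j + 1) = insert ⟨o + j, h⟩ (blockSet n o j) := by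
    ext i; simp only [mem_insert, mem_blockSet, Fin.ext_iff]; omega
  rw [blockPsum_eq_sum_blockSet, this, sum_insert (by simp), add_comm]
  rfl

lemma sum_le_blockPsum_card (μ : Fin n → ℚ) {o : ℕ} (t : Finset (Fin n))
    (ht : ∀ i ∈ t, o ≤ (i : ℕ)) (hμ : ∀ i j : Fin n, o ≤ (i : ℕ) → i ≤ j → j ∈ t → μ j ≤ μ i) :
    ∑ i ∈ t, μ i ≤ blockPsum μ o #t := by
  induction t using Finset.induction_on_max with
  | empty => simp [blockPsum_zero]
  | insert a s has ih =>
    have ha : a ∉ s := fun h => lt_irrefl a (has a h)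
    have hs : s ⊆ blockSet n o ((a : ℕ) - o) := by
      intro i hi
      have := ht i (mem_insert_of_mem hi)
      have := has i hi
      simp only [mem_blockSet]; omega
    have hoa := ht a (mem_insert_self a s)
    have hcard : #s ≤ (a : ℕ) - o := by
      simpa [card_blockSet (by omega : o + ((a : ℕ) - o) ≤ n)] using card_le_card hs
    have hlt : o + #s < n := by omega
    rw [sum_insert ha, card_insert_of_notMem ha, blockPsum_succ μ hlt, add_comm]
    gcongr
    · exact ih (fun i hi => ht i (mem_insert_of_mem hi))
        (fun i j hi hij hj => hμ i j hi hij (mem_insert_of_mem hj))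
    · exact hμ ⟨o + #s, hlt⟩ a (Nat.le_add_right o _) (Fin.le_def.2 (show o + #s ≤ a by omega))
        (mem_insert_self a s)

end Block

def depthTerm {n : ℕ} (μ : Fin n → ℚ) (o m j : ℕ) : ℚ :=
  blockPsum μ o j - (j : ℚ) / (m : ℚ) * blockPsum μ o m

def blockMean {n : ℕ} (μ : Fin n → ℚ) (o m : ℕ) : ℚ :=
  blockPsum μ o m / (m : ℚ)

section Depth

variable {n : ℕ} (μ : Fin n → ℚ) {o m : ℕ}

@[simp]
lemma depthTerm_zero (o m : ℕ) : depthTerm μ o m 0 = 0 := by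
  simp [depthTerm, blockPsum_zero]

@[simp]
lemma depthTerm_self (o m : ℕ) : depthTerm μ o m m = 0 := by
  rcases eq_or_ne m 0 with rfl | hm
  · exact depthTerm_zero μ o 0
  · simp [depthTerm, div_self (Nat.cast_ne_zero.2 hm : (m : ℚ) ≠ 0)]

lemma depthTerm_le_blockDepth {j : ℕ} (h1 : 0 < j) (h2 : j < m) :
    depthTerm μ o m j ≤ blockDepth μ o m := by
  have hj : j ∈ Icc 1 (m - 1) := mem_Icc.2 ⟨h1, by omega⟩
  rw [blockDepth, dif_pos ⟨j, hj⟩]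
  exact le_sup' (fun j : ℕ => depthTerm μ o m j) hj

lemma blockDepth_eq_zero_or_exists (o m : ℕ) :
    blockDepth μ o m = 0 ∨ ∃ j, 0 < j ∧ j < m ∧ blockDepth μ o m = depthTerm μ o m j := by
  rw [blockDepth]
  split_ifs with hne
  · obtain ⟨j, hj, hje⟩ := exists_mem_eq_sup' hne fun j : ℕ => depthTerm μ o m j
    rw [mem_Icc] at hj
    exact Or.inr ⟨j, hj.1, by omega, hje⟩
  · exact Or.inl rfl

lemma exists_lt_blockDepth_eq (hm : 0 < m) :
    ∃ j < m, blockDepth μ o m = depthTerm μ o m j := by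
  rcases blockDepth_eq_zero_or_exists μ o m with h | ⟨j, -, hj, h⟩
  · exact ⟨0, hm, by simp [h]⟩
  · exact ⟨j, hj, h⟩

lemma exists_pos_blockDepth_eq (hm : 0 < m) :
    ∃ j, 0 < j ∧ j ≤ m ∧ blockDepth μ o m = depthTerm μ o m j := by
  rcases blockDepth_eq_zero_or_exists μ o m with h | ⟨j, hj0, hj, h⟩
  · exact ⟨m, hm, le_rfl, by simp [h]⟩
  · exact ⟨j, hj0, hj.le, h⟩

lemma depthTerm_le_max_blockDepth {j : ℕ} (hj : j ≤ m) :
    depthTerm μ o m j ≤ max 0 (blockDepth μ o m) := by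
  rcases Nat.eq_zero_or_pos j with rfl | hj0
  · simp
  rcases hj.lt_or_eq with hjm | rfl
  · exact le_max_of_le_right (depthTerm_le_blockDepth μ hj0 hjm)
  · simp

lemma blockDepth_le {x : ℚ} (hx : 0 ≤ x) (h : ∀ j, 0 < j → j < m → depthTerm μ o m j ≤ x) :
    blockDepth μ o m ≤ x := by
  rcases blockDepth_eq_zero_or_exists μ o m with h0 | ⟨j, hj0, hj, hje⟩
  · rwa [h0]
  · exact hje ▸ h j hj0 hj

variable {μ}

lemma blockPsum_of_eqOn {v : ℚ} (hom : o + m ≤ n) (hv : ∀ i ∈ blockSet n o m, μ i = v)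
    {j : ℕ} (hj : j ≤ m) : blockPsum μ o j = j * v := by
  rw [blockPsum_eq_sum_blockSet, sum_congr rfl fun i hi => hv i (blockSet_mono hj hi),
    sum_const, card_blockSet (by omega), nsmul_eq_mul]

lemma depthTerm_of_eqOn {v : ℚ} (hom : o + m ≤ n) (hv : ∀ i ∈ blockSet n o m, μ i = v)
    {j : ℕ} (hj : j ≤ m) : depthTerm μ o m j = 0 := by
  rcases Nat.eq_zero_or_pos m with rfl | hm
  · rw [Nat.le_zero.1 hj, depthTerm_zero]
  have hm' : (m : ℚ) ≠ 0 := by positivity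
  rw [depthTerm, blockPsum_of_eqOn hom hv hj, blockPsum_of_eqOn hom hv le_rfl]
  field_simp
  ring

lemma blockDepth_of_eqOn {v : ℚ} (hom : o + m ≤ n) (hv : ∀ i ∈ blockSet n o m, μ i = v) :
    blockDepth μ o m = 0 :=
  le_antisymm (blockDepth_le μ le_rfl fun j _ hj => (depthTerm_of_eqOn hom hv hj.le).le)
    (by
      rcases blockDepth_eq_zero_or_exists μ o m with h | ⟨j, -, hj, h⟩
      · exact h.ge
      · exact h ▸ (depthTerm_of_eqOn hom hv hj.le).ge)

lemma exists_depthTerm_pos_eq_blockDepth (i₀ : Fin n) (hi₀ : (i₀ : ℕ) = o) (hom : o + m ≤ n)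
    (hle : ∀ i ∈ blockSet n o m, μ i ≤ μ i₀)
    (hne : ∃ i ∈ blockSet n o m, ∃ j ∈ blockSet n o m, μ i ≠ μ j) :
    ∃ j, 0 < j ∧ j < m ∧ blockDepth μ o m = depthTerm μ o m j ∧ 0 < depthTerm μ o m j := by
  obtain ⟨w, hw, hwlt⟩ : ∃ w ∈ blockSet n o m, μ w < μ i₀ := by
    obtain ⟨i, hi, j, hj, hij⟩ := hne
    rcases (hle i hi).lt_or_eq with h | h
    · exact ⟨i, hi, h⟩
    · exact ⟨j, hj, (hle j hj).lt_of_ne (h ▸ hij.symm)⟩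
  have hm : 1 < m := by
    have : w ≠ i₀ := fun h => hwlt.ne (h ▸ rfl)
    have : (w : ℕ) ≠ o := fun h => this (Fin.ext (h.trans hi₀.symm))
    simp only [mem_blockSet] at hw; omega
  have hsum : blockPsum μ o m < m * μ i₀ := by
    calc blockPsum μ o m < ∑ _i ∈ blockSet n o m, μ i₀ :=
          sum_lt_sum hle ⟨w, hw, hwlt⟩
      _ = m * μ i₀ := by rw [sum_const, card_blockSet hom, nsmul_eq_mul]
  have hone : blockPsum μ o 1 = μ i₀ := by
    rw [← zero_add 1, blockPsum_succ μ (by omega), blockPsum_zero, zero_add]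
    simp [← hi₀]
  have hpos : 0 < depthTerm μ o m 1 := by
    have : (0 : ℚ) < m := by positivity
    rw [depthTerm, hone, Nat.cast_one, sub_pos, one_div_mul_eq_div, div_lt_iff₀ this]
    linarith
  rcases blockDepth_eq_zero_or_exists μ o m with h | ⟨j, hj0, hj, h⟩
  · exact absurd (h ▸ depthTerm_le_blockDepth μ one_pos hm) hpos.not_ge
  · exact ⟨j, hj0, hj, h, h ▸ hpos.trans_le (depthTerm_le_blockDepth μ one_pos hm)⟩

end Depth

lemma sum_le_blockPsum_of_perm {n : ℕ} {μ σ : Fin n → ℚ} (π : Equiv.Perm (Fin n))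
    (hσ : ∀ i, σ i = μ (π i)) (hanti : Antitone σ) (t : Finset (Fin n)) :
    ∑ i ∈ t, μ i ≤ blockPsum σ 0 #t := by
  have hsum : ∑ i ∈ t, μ i = ∑ i ∈ t.map π.symm.toEmbedding, σ i := by
    simp [sum_map, hσ]
  rw [hsum, ← card_map π.symm.toEmbedding]
  exact sum_le_blockPsum_card σ _ (fun _ _ => Nat.zero_le _) fun _ _ _ hij _ => hanti hij

structure IsBlockRearrangement {c m : ℕ} (μ σ : Fin (c + m) → ℚ)
    (π : Equiv.Perm (Fin (c + m))) : Prop where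
  apply_eq : ∀ i, σ i = μ (π i)
  antitone : Antitone σ
  antitone_left : ∀ i j : Fin (c + m), i ≤ j → (j : ℕ) < c → μ j ≤ μ i
  antitone_right : ∀ i j : Fin (c + m), c ≤ (i : ℕ) → i ≤ j → μ j ≤ μ i

section Split

variable {c m : ℕ} {μ σ : Fin (c + m) → ℚ} {π : Equiv.Perm (Fin (c + m))}

lemma blockPsum_add_blockPsum_le (hσ : ∀ i, σ i = μ (π i)) (hanti : Antitone σ)
    {j₁ j₂ : ℕ} (h₁ : j₁ ≤ c) (h₂ : j₂ ≤ m) :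
    blockPsum μ 0 j₁ + blockPsum μ c j₂ ≤ blockPsum σ 0 (j₁ + j₂) := by
  have hdisj : Disjoint (blockSet (c + m) 0 j₁) (blockSet (c + m) c j₂) := by
    rw [disjoint_left]; intro i; simp only [mem_blockSet]; omega
  have hcard : #(blockSet (c + m) 0 j₁ ∪ blockSet (c + m) c j₂) = j₁ + j₂ := by
    rw [card_union_of_disjoint hdisj, card_blockSet (by omega), card_blockSet (by omega)]
  rw [blockPsum_eq_sum_blockSet, blockPsum_eq_sum_blockSet, ← sum_union hdisj, ← hcard]
  exact sum_le_blockPsum_of_perm π hσ hanti _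

lemma exists_blockPsum_le_add (hσ : ∀ i, σ i = μ (π i))
    (hdec1 : ∀ i j : Fin (c + m), i ≤ j → (j : ℕ) < c → μ j ≤ μ i)
    (hdec2 : ∀ i j : Fin (c + m), c ≤ (i : ℕ) → i ≤ j → μ j ≤ μ i) (j : ℕ) (hj : j ≤ c + m) :
    ∃ j₁ ≤ c, ∃ j₂ ≤ m, j₁ + j₂ = j ∧ blockPsum σ 0 j ≤ blockPsum μ 0 j₁ + blockPsum μ c j₂ := by
  set s := (blockSet (c + m) 0 j).map π.toEmbedding
  set s₁ := s.filter fun i : Fin (c + m) => (i : ℕ) < c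
  set s₂ := s.filter fun i : Fin (c + m) => ¬(i : ℕ) < c
  have hs₁ : s₁ ⊆ blockSet (c + m) 0 c := by
    intro i hi; simp only [s₁, mem_filter] at hi; simp [hi.2]
  have hs₂ : s₂ ⊆ blockSet (c + m) c m := by
    intro i hi; simp only [s₂, mem_filter] at hi; simp only [mem_blockSet]; omega
  refine ⟨#s₁, ?_, #s₂, ?_, ?_, ?_⟩
  · simpa [card_blockSet] using card_le_card hs₁
  · simpa [card_blockSet] using card_le_card hs₂
  · rw [card_filter_add_card_filter_not, card_map, card_blockSet (by omega)]
  have hσs : blockPsum σ 0 j = ∑ i ∈ s₁, μ i + ∑ i ∈ s₂, μ i := by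
    rw [sum_filter_add_sum_filter_not, sum_map, blockPsum_eq_sum_blockSet]
    simp [hσ]
  rw [hσs]
  gcongr
  · exact sum_le_blockPsum_card μ s₁ (fun _ _ => Nat.zero_le _)
      fun i j _ hij hj => hdec1 i j hij (mem_filter.1 hj).2
  · exact sum_le_blockPsum_card μ s₂ (fun i hi => not_lt.1 (mem_filter.1 hi).2)
      fun i j hi hij _ => hdec2 i j hi hij

lemma blockPsum_rearrangement (hμσ : IsBlockRearrangement μ σ π) :
    blockPsum σ 0 (c + m) = blockPsum μ 0 c + blockPsum μ c m := by
  refine le_antisymm ?_ (blockPsum_add_blockPsum_le hμσ.apply_eq hμσ.antitone le_rfl le_rfl)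
  obtain ⟨j₁, h₁, j₂, h₂, hj, hle⟩ := exists_blockPsum_le_add hμσ.apply_eq hμσ.antitone_left
    hμσ.antitone_right (c + m) le_rfl
  obtain ⟨rfl, rfl⟩ : j₁ = c ∧ j₂ = m := by omega
  exact hle

/-- The term of `blockDepth σ 0 (c + m)` at `j₁ + j₂`, evaluated on the split partial sum
`P₁(j₁) + P₂(j₂)` and expressed through the two blocks (see `splitValue_eq`). -/
def splitValue {n : ℕ} (μ : Fin n → ℚ) (c m j₁ j₂ : ℕ) : ℚ :=
  depthTerm μ 0 c j₁ + depthTerm μ c m j₂ +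
    (blockMean μ 0 c - blockMean μ c m) * (j₁ * m - j₂ * c) / (c + m)

lemma splitValue_eq (μ : Fin (c + m) → ℚ) (hc : 0 < c) (hm : 0 < m) (j₁ j₂ : ℕ) :
    splitValue μ c m j₁ j₂ = blockPsum μ 0 j₁ + blockPsum μ c j₂ -
      ((j₁ + j₂ : ℕ) : ℚ) / ((c + m : ℕ) : ℚ) * (blockPsum μ 0 c + blockPsum μ c m) := by
  have hc' : (c : ℚ) ≠ 0 := by positivity
  have hm' : (m : ℚ) ≠ 0 := by positivity
  have hcm : (c : ℚ) + m ≠ 0 := by positivity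
  simp only [splitValue, depthTerm, blockMean]
  push_cast
  field_simp
  ring

lemma splitValue_le_blockDepth (hμσ : IsBlockRearrangement μ σ π)
    (hc : 0 < c) (hm : 0 < m) {j₁ j₂ : ℕ} (h₁ : j₁ ≤ c) (h₂ : j₂ ≤ m) (hpos : 0 < j₁ + j₂)
    (hlt : j₁ + j₂ < c + m) :
    splitValue μ c m j₁ j₂ ≤ blockDepth σ 0 (c + m) := by
  calc splitValue μ c m j₁ j₂ ≤ depthTerm σ 0 (c + m) (j₁ + j₂) := by
        rw [splitValue_eq μ hc hm, depthTerm, blockPsum_rearrangement hμσ]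
        gcongr
        exact blockPsum_add_blockPsum_le hμσ.apply_eq hμσ.antitone h₁ h₂
    _ ≤ blockDepth σ 0 (c + m) := depthTerm_le_blockDepth σ hpos hlt

lemma exists_blockDepth_le_splitValue (hμσ : IsBlockRearrangement μ σ π)
    (hc : 0 < c) (hm : 0 < m) :
    ∃ j₁ ≤ c, ∃ j₂ ≤ m, blockDepth σ 0 (c + m) ≤ splitValue μ c m j₁ j₂ := by
  rcases blockDepth_eq_zero_or_exists σ 0 (c + m) with h | ⟨j, -, hj, h⟩
  · exact ⟨0, Nat.zero_le _, 0, Nat.zero_le _, by simp [h, splitValue]⟩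
  obtain ⟨j₁, h₁, j₂, h₂, rfl, hle⟩ := exists_blockPsum_le_add hμσ.apply_eq hμσ.antitone_left
    hμσ.antitone_right j hj.le
  refine ⟨j₁, h₁, j₂, h₂, ?_⟩
  rw [h, splitValue_eq μ hc hm, depthTerm, blockPsum_rearrangement hμσ]
  gcongr

end Split

section Equality

variable {c m : ℕ} {μ σ : Fin (c + m) → ℚ} {π : Equiv.Perm (Fin (c + m))}

lemma max_blockDepth_lt_of_blockMean_lt (hμσ : IsBlockRearrangement μ σ π)
    (hc : 0 < c) (hm : 0 < m) (hlt : blockMean μ 0 c < blockMean μ c m) :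
    max (blockDepth μ 0 c) (blockDepth μ c m) < blockDepth σ 0 (c + m) := by
  have hc' : (0 : ℚ) < c := by exact_mod_cast hc
  have hm' : (0 : ℚ) < m := by exact_mod_cast hm
  refine max_lt ?_ ?_
  · obtain ⟨j, hj, hd⟩ := exists_lt_blockDepth_eq μ (o := 0) hc
    have hj' : (j : ℚ) < c := by exact_mod_cast hj
    have hsplit := splitValue_le_blockDepth hμσ hc hm hj.le le_rfl (by omega) (by omega)
    have hgap : 0 < (blockMean μ 0 c - blockMean μ c m) * (j * m - m * c) / (c + m) :=
      div_pos (mul_pos_of_neg_of_neg (by linarith) (by nlinarith)) (by positivity)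
    rw [splitValue, depthTerm_self] at hsplit
    linarith
  · obtain ⟨j, hj0, hj, hd⟩ := exists_pos_blockDepth_eq μ (o := c) hm
    have hj' : (0 : ℚ) < j := by exact_mod_cast hj0
    have hsplit := splitValue_le_blockDepth hμσ hc hm (Nat.zero_le c) hj (by omega) (by omega)
    have hgap : 0 < (blockMean μ 0 c - blockMean μ c m) * ((0 : ℕ) * m - j * c) / (c + m) :=
      div_pos (mul_pos_of_neg_of_neg (by linarith) (by push_cast; nlinarith)) (by positivity)
    rw [splitValue, depthTerm_zero] at hsplit
    linarith

lemma max_blockDepth_lt_of_blockMean_gt (hμσ : IsBlockRearrangement μ σ π)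
    (hc : 0 < c) (hm : 0 < m) (hgt : blockMean μ c m < blockMean μ 0 c) :
    max (blockDepth μ 0 c) (blockDepth μ c m) < blockDepth σ 0 (c + m) := by
  have hc' : (0 : ℚ) < c := by exact_mod_cast hc
  have hm' : (0 : ℚ) < m := by exact_mod_cast hm
  refine max_lt ?_ ?_
  · obtain ⟨j, hj0, hj, hd⟩ := exists_pos_blockDepth_eq μ (o := 0) hc
    have hj' : (0 : ℚ) < j := by exact_mod_cast hj0
    have hsplit := splitValue_le_blockDepth hμσ hc hm hj (Nat.zero_le m) (by omega) (by omega)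
    have hgap : 0 < (blockMean μ 0 c - blockMean μ c m) * (j * m - (0 : ℕ) * c) / (c + m) :=
      div_pos (mul_pos (by linarith) (by push_cast; nlinarith)) (by positivity)
    rw [splitValue, depthTerm_zero] at hsplit
    linarith
  · obtain ⟨j, hj, hd⟩ := exists_lt_blockDepth_eq μ (o := c) hm
    have hj' : (j : ℚ) < m := by exact_mod_cast hj
    have hsplit := splitValue_le_blockDepth hμσ hc hm le_rfl hj.le (by omega) (by omega)
    have hgap : 0 < (blockMean μ 0 c - blockMean μ c m) * (c * m - j * c) / (c + m) :=
      div_pos (mul_pos (by linarith) (by nlinarith)) (by positivity)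
    rw [splitValue, depthTerm_self] at hsplit
    linarith

lemma max_blockDepth_lt_of_not_const (hμσ : IsBlockRearrangement μ σ π)
    (hmean : blockMean μ 0 c = blockMean μ c m)
    (hne₁ : ∃ i j : Fin (c + m), (i : ℕ) < c ∧ (j : ℕ) < c ∧ μ i ≠ μ j)
    (hne₂ : ∃ i j : Fin (c + m), c ≤ (i : ℕ) ∧ c ≤ (j : ℕ) ∧ μ i ≠ μ j) :
    max (blockDepth μ 0 c) (blockDepth μ c m) < blockDepth σ 0 (c + m) := by
  obtain ⟨i, i', hi, hi', hii'⟩ := hne₁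
  obtain ⟨k, k', hk, hk', hkk'⟩ := hne₂
  obtain ⟨j₁, hj₁0, hj₁, hd₁, hpos₁⟩ :=
    exists_depthTerm_pos_eq_blockDepth (o := 0) (m := c) ⟨0, by omega⟩ rfl (by omega)
      (fun i hi => hμσ.antitone_left _ i (Fin.le_def.2 (Nat.zero_le _)) (by simpa using hi))
      ⟨i, by simpa using hi, i', by simpa using hi', hii'⟩
  obtain ⟨j₂, hj₂0, hj₂, hd₂, hpos₂⟩ :=
    exists_depthTerm_pos_eq_blockDepth (o := c) (m := m) ⟨c, by omega⟩ rfl le_rfl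
      (fun i hi => hμσ.antitone_right _ i le_rfl (Fin.le_def.2 (by simpa using hi)))
      ⟨k, by simpa using hk, k', by simpa using hk', hkk'⟩
  have hsplit := splitValue_le_blockDepth hμσ (by omega) (by omega) hj₁.le hj₂.le
    (by omega) (by omega)
  rw [splitValue, hmean, sub_self, zero_mul, zero_div, add_zero] at hsplit
  rw [hd₁, hd₂]
  exact max_lt (by linarith) (by linarith)

lemma max_blockDepth_eq_of_eqOn_left (hμσ : IsBlockRearrangement μ σ π)
    (hc : 0 < c) (hm : 0 < m) (hmean : blockMean μ 0 c = blockMean μ c m) {v : ℚ}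
    (hv : ∀ i ∈ blockSet (c + m) 0 c, μ i = v) :
    max (blockDepth μ 0 c) (blockDepth μ c m) = blockDepth σ 0 (c + m) := by
  have hsplit (j₁ j₂ : ℕ) :
      splitValue μ c m j₁ j₂ = depthTerm μ 0 c j₁ + depthTerm μ c m j₂ := by
    rw [splitValue, hmean, sub_self, zero_mul, zero_div, add_zero]
  have hA (j : ℕ) (hj : j ≤ c) : depthTerm μ 0 c j = 0 := depthTerm_of_eqOn (by omega) hv hj
  have hB (j : ℕ) (hj : j ≤ m) : depthTerm μ c m j ≤ blockDepth σ 0 (c + m) := by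
    have hle : splitValue μ c m (if j = 0 then c else 0) j ≤ blockDepth σ 0 (c + m) :=
      splitValue_le_blockDepth hμσ hc hm (by split_ifs <;> omega) hj
        (by split_ifs <;> omega) (by split_ifs <;> omega)
    rwa [hsplit, hA _ (by split_ifs <;> omega), zero_add] at hle
  have hD : 0 ≤ blockDepth σ 0 (c + m) := by simpa using hB 0 (Nat.zero_le m)
  rw [blockDepth_of_eqOn (by omega) hv]
  refine le_antisymm (max_le hD (blockDepth_le μ hD fun j _ hj => hB j hj.le)) ?_
  obtain ⟨j₁, h₁, j₂, h₂, hle⟩ := exists_blockDepth_le_splitValue hμσ hc hm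
  rw [hsplit, hA j₁ h₁, zero_add] at hle
  exact hle.trans (depthTerm_le_max_blockDepth μ h₂)

lemma max_blockDepth_eq_of_eqOn_right (hμσ : IsBlockRearrangement μ σ π)
    (hc : 0 < c) (hm : 0 < m) (hmean : blockMean μ 0 c = blockMean μ c m) {v : ℚ}
    (hv : ∀ i ∈ blockSet (c + m) c m, μ i = v) :
    max (blockDepth μ 0 c) (blockDepth μ c m) = blockDepth σ 0 (c + m) := by
  have hsplit (j₁ j₂ : ℕ) :
      splitValue μ c m j₁ j₂ = depthTerm μ 0 c j₁ + depthTerm μ c m j₂ := by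
    rw [splitValue, hmean, sub_self, zero_mul, zero_div, add_zero]
  have hB (j : ℕ) (hj : j ≤ m) : depthTerm μ c m j = 0 := depthTerm_of_eqOn le_rfl hv hj
  have hA (j : ℕ) (hj : j ≤ c) : depthTerm μ 0 c j ≤ blockDepth σ 0 (c + m) := by
    have hle : splitValue μ c m j (if j = 0 then m else 0) ≤ blockDepth σ 0 (c + m) :=
      splitValue_le_blockDepth hμσ hc hm hj (by split_ifs <;> omega)
        (by split_ifs <;> omega) (by split_ifs <;> omega)
    rwa [hsplit, hB _ (by split_ifs <;> omega), add_zero] at hle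
  have hD : 0 ≤ blockDepth σ 0 (c + m) := by simpa using hA 0 (Nat.zero_le c)
  rw [blockDepth_of_eqOn le_rfl hv, max_comm]
  refine le_antisymm (max_le hD (blockDepth_le μ hD fun j _ hj => hA j hj.le)) ?_
  obtain ⟨j₁, h₁, j₂, h₂, hle⟩ := exists_blockDepth_le_splitValue hμσ hc hm
  rw [hsplit, hB j₂ h₂, add_zero] at hle
  exact hle.trans (depthTerm_le_max_blockDepth μ h₁)

end Equality

theorem stmt5_general (n c : ℕ) (hc1 : 1 ≤ c) (hc2 : c ≤ n - 1) (μ : Fin n → ℚ)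
    (hdec1 : ∀ i j : Fin n, i ≤ j → (j : ℕ) < c → μ j ≤ μ i)
    (hdec2 : ∀ i j : Fin n, c ≤ (i : ℕ) → i ≤ j → μ j ≤ μ i)
    (σ : Fin n → ℚ) (π : Equiv.Perm (Fin n))
    (hσ : ∀ i, σ i = μ (π i)) (hanti : Antitone σ) :
    max (blockDepth μ 0 c) (blockDepth μ c (n - c)) = blockDepth σ 0 n ↔
      (blockPsum μ 0 c / (c : ℚ) = blockPsum μ c (n - c) / ((n - c : ℕ) : ℚ) ∧
       ((∀ i j : Fin n, (i : ℕ) < c → (j : ℕ) < c → μ i = μ j) ∨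
        (∀ i j : Fin n, c ≤ (i : ℕ) → c ≤ (j : ℕ) → μ i = μ j))) := by
  obtain ⟨m, rfl⟩ : ∃ m, n = c + m := ⟨n - c, by omega⟩
  have hm : 0 < m := by omega
  have hμσ : IsBlockRearrangement μ σ π := ⟨hσ, hanti, hdec1, hdec2⟩
  rw [Nat.add_sub_cancel_left]
  change _ ↔ blockMean μ 0 c = blockMean μ c m ∧ _
  constructor
  · intro heq
    have hmean : blockMean μ 0 c = blockMean μ c m := by
      by_contra hne
      rcases lt_or_gt_of_ne hne with hlt | hgt
      · exact (max_blockDepth_lt_of_blockMean_lt hμσ hc1 hm hlt).ne heq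
      · exact (max_blockDepth_lt_of_blockMean_gt hμσ hc1 hm hgt).ne heq
    refine ⟨hmean, ?_⟩
    by_contra! hne
    exact (max_blockDepth_lt_of_not_const hμσ hmean hne.1 hne.2).ne heq
  · rintro ⟨hmean, hconst | hconst⟩
    · exact max_blockDepth_eq_of_eqOn_left hμσ hc1 hm hmean
        fun i hi => hconst i ⟨0, by omega⟩ (by simpa using hi) hc1
    · exact max_blockDepth_eq_of_eqOn_right hμσ hc1 hm hmean
        fun i hi => hconst i ⟨c, by omega⟩ (by simpa using hi) le_rfl

theorem stmt5 (n c : ℕ) (hn : 2 ≤ n) (hc1 : 1 ≤ c) (hc2 : c ≤ n - 1) (μ : Fin n → ℚ)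
    (hdec1 : ∀ i j : Fin n, i ≤ j → (j : ℕ) < c → μ j ≤ μ i)
    (hdec2 : ∀ i j : Fin n, c ≤ (i : ℕ) → i ≤ j → μ j ≤ μ i)
    (σ : Fin n → ℚ) (π : Equiv.Perm (Fin n))
    (hσ : ∀ i, σ i = μ (π i)) (hanti : Antitone σ) :
    max (blockDepth μ 0 c) (blockDepth μ c (n - c)) = blockDepth σ 0 n ↔
      (blockPsum μ 0 c / (c : ℚ) = blockPsum μ c (n - c) / ((n - c : ℕ) : ℚ) ∧
       ((∀ i j : Fin n, (i : ℕ) < c → (j : ℕ) < c → μ i = μ j) ∨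
        (∀ i j : Fin n, c ≤ (i : ℕ) → c ≤ (j : ℕ) → μ i = μ j))) :=
  stmt5_general n c hc1 hc2 μ hdec1 hdec2 σ π hσ hanti
end

section
/- Let (W,S) be a Coxeter system with length function ℓ, and let φ : W → W be a group automorphism satisfying ℓ(φ(w)) = ℓ(w) for all w ∈ W. Fix d ≥ 1, define the group automorphism σ of W^d by σ(g₁,…,g_d) := (φ(g_d), g₁, …, g_{d−1}), and define L : W^d → ℕ by L(g₁,…,g_d) := ℓ(g₁)+⋯+ℓ(g_d). For x = (x₁,…,x_d) ∈ W^d set x' := x_d x_{d−1} ⋯ x₁ ∈ W. Then the following are equivalent: (i) for every m ≥ 1, L(x · σ(x) · σ²(x) ⋯ σ^{m−1}(x)) = m · L(x); (ii) ℓ(x') = ℓ(x₁)+⋯+ℓ(x_d), and for every m ≥ 1, ℓ(x' · φ(x') · φ²(x') ⋯ φ^{m−1}(x')) = m · ℓ(x'). -/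
/-- The twisted cyclic shift `σ(g₁,…,g_d) = (φ(g_d), g₁, …, g_{d−1})` on `W^d`
(0-indexed: `(σ g) 0 = φ (g (d-1))` and `(σ g) i = g (i-1)` for `i > 0`). -/
def cyc {W : Type*} (d : ℕ) (φ : W → W) (g : Fin d → W) : Fin d → W :=
  fun i =>
    if _h : (i : ℕ) = 0 then φ (g ⟨d - 1, by have := i.isLt; omega⟩)
    else g ⟨(i : ℕ) - 1, by have := i.isLt; omega⟩

/-!
Unroll `x` into the sequence `y = unroll d φ x`, `y n = φ^⌊n/d⌋ (x_{d-1-(n mod d)})`, so that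
`y n = x_{d-1-n}` for `n < d` and `y (n + d) = φ (y n)`. The `i`-th coordinate of
`x σ(x) ⋯ σ^{m-1}(x)` is then the product of the `m` consecutive terms of `y` starting at `d-1-i`,
while `x' φ(x') ⋯ φ^{m-1}(x')` is the product of the first `md` terms. Since `ℓ` is subadditive and
`ℓ ∘ y` is `d`-periodic, (i) says that every block of consecutive terms of `y` starting below `d`
is length-additive, and (ii) says that every initial block of length `md` is. Every block of the
first kind is contained in an initial block of the second kind, and length-additivity passes to
sub-blocks.
-/

open Finset

theorem Function.Periodic.sum_range_add {M : Type*} [AddCommMonoid M] {f : ℕ → M} {c : ℕ}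
    (hf : Function.Periodic f c) (a : ℕ) :
    ∑ k ∈ range c, f (a + k) = ∑ k ∈ range c, f k := by
  calc ∑ k ∈ range c, f (a + k) = ∑ k ∈ Ico a (a + c), f (k % c) := by
        simp only [hf.map_mod_nat, sum_Ico_eq_sum_range, Nat.add_sub_cancel_left]
    _ = (((Multiset.Ico a (a + c)).map (· % c)).map f).sum := by
        rw [Multiset.map_map]; rfl
    _ = ∑ k ∈ range c, f k := by
        rw [Nat.multiset_Ico_map_mod]; rfl

theorem List.sum_map_range' {M : Type*} [AddCommMonoid M] (f : ℕ → M) (a m : ℕ) :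
    ((List.range' a m).map f).sum = ∑ k ∈ Finset.range m, f (a + k) := by
  rw [← Nat.add_sub_cancel_left (n := a) (m := m), ← sum_Ico_eq_sum_range, Nat.Ico_eq_range']
  rfl

theorem List.map_range'_eq_ofFn {α : Type*} (f : ℕ → α) (a m : ℕ) :
    (List.range' a m).map f = List.ofFn fun k : Fin m => f (a + k) := by
  apply List.ext_getElem (by simp)
  intro j _ _
  simp

theorem List.range'_infix_range' {a m b n : ℕ} (hba : b ≤ a) (h : a + m ≤ b + n) :
    List.range' a m <:+: List.range' b n := by
  obtain ⟨c, rfl⟩ := Nat.exists_eq_add_of_le hba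
  obtain ⟨k, rfl⟩ : ∃ k, n = c + m + k := ⟨n - c - m, by omega⟩
  refine ⟨List.range' b c, List.range' (b + c + m) k, ?_⟩
  rw [List.append_assoc, List.range'_append_1, List.range'_append_1, Nat.add_assoc]

namespace CoxeterSystem

variable {B W : Type*} [Group W] {M : CoxeterMatrix B} (cs : CoxeterSystem M W)

theorem length_list_prod_le (l : List W) : cs.length l.prod ≤ (l.map cs.length).sum := by
  induction l with
  | nil => simp
  | cons a l ih =>
    rw [List.prod_cons, List.map_cons, List.sum_cons]
    exact (cs.length_mul_le a l.prod).trans (Nat.add_le_add_left ih _)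

def IsLengthAdditive (l : List W) : Prop :=
  cs.length l.prod = (l.map cs.length).sum

variable {cs}

theorem IsLengthAdditive.nil : cs.IsLengthAdditive [] := by
  simp [IsLengthAdditive]

theorem IsLengthAdditive.of_infix {l₁ l₂ : List W} (h : cs.IsLengthAdditive l₂)
    (h₁₂ : l₁ <:+: l₂) : cs.IsLengthAdditive l₁ := by
  obtain ⟨s, t, rfl⟩ := h₁₂
  unfold IsLengthAdditive at h ⊢
  simp only [List.prod_append, List.map_append, List.sum_append] at h
  have hs := cs.length_list_prod_le s
  have h₁ := cs.length_list_prod_le l₁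
  have ht := cs.length_list_prod_le t
  have := cs.length_mul_le (s.prod * l₁.prod) t.prod
  have := cs.length_mul_le s.prod l₁.prod
  omega

variable (cs)

theorem forall_isLengthAdditive_range'_iff (y : ℕ → W) {d : ℕ} (hd : 0 < d) :
    (∀ m, ∀ a < d, cs.IsLengthAdditive ((List.range' a m).map y)) ↔
      ∀ m, 1 ≤ m → cs.IsLengthAdditive ((List.range' 0 (m * d)).map y) := by
  refine ⟨fun h m _ => h _ 0 hd, fun h m a ha => ?_⟩
  have hm : m ≤ m * d := Nat.le_mul_of_pos_right m hd
  exact (h (m + 1) m.succ_pos).of_infix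
    ((List.range'_infix_range' a.zero_le (by rw [Nat.succ_mul]; omega)).map y)

end CoxeterSystem

section Unroll

variable {W : Type*} (d : ℕ) [NeZero d] (φ : W → W) (x : Fin d → W)

def unroll (n : ℕ) : W :=
  φ^[n / d] (x (Fin.ofNat d n).rev)

theorem unroll_val_rev (i : Fin d) : unroll d φ x i.rev = x i := by
  rw [unroll, Nat.div_eq_of_lt i.rev.isLt, Fin.ofNat_val_eq_self, Fin.rev_rev]
  rfl

theorem unroll_add_self (n : ℕ) : unroll d φ x (n + d) = φ (unroll d φ x n) := by
  simp only [unroll, Nat.add_div_right n (NeZero.pos d), Function.iterate_succ_apply']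
  congr 3
  ext
  simp

theorem cyc_iterate_apply (k : ℕ) (i : Fin d) :
    (cyc d φ)^[k] x i = unroll d φ x (i.rev + k) := by
  induction k generalizing i with
  | zero => exact (unroll_val_rev d φ x i).symm
  | succ k ih =>
    rw [Function.iterate_succ_apply', cyc]
    split_ifs
    · rw [ih, ← unroll_add_self d φ x]
      congr 1
      simp only [Fin.val_rev]
      omega
    · rw [ih]
      congr 1
      simp only [Fin.val_rev]
      omega

theorem map_unroll_range'_zero : (List.range' 0 d).map (unroll d φ x) = (List.ofFn x).reverse := by
  apply List.ext_getElem (by simp)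
  intro j h _
  simp only [List.length_map, List.length_range'] at h
  have := unroll_val_rev d φ x ⟨d - 1 - j, by omega⟩
  rw [Fin.val_rev, show d - (d - 1 - j + 1) = j by omega] at this
  simpa using this

end Unroll

section Products

variable {W : Type*} [Monoid W] (d : ℕ) [NeZero d]

theorem list_prod_cyc_iterate_apply (φ : W → W) (x : Fin d → W) (m : ℕ) (i : Fin d) :
    (List.ofFn fun k : Fin m => (cyc d φ)^[k] x).prod i =
      ((List.range' i.rev m).map (unroll d φ x)).prod := by
  simp only [Pi.list_prod_apply, List.map_ofFn, List.map_range'_eq_ofFn, Function.comp_def,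
    cyc_iterate_apply]

variable {F : Type*} [FunLike F W W] [MonoidHomClass F W W] (φ : F) (x : Fin d → W)

theorem prod_map_unroll_range'_add_self (a m : ℕ) :
    ((List.range' (a + d) m).map (unroll d φ x)).prod =
      φ ((List.range' a m).map (unroll d φ x)).prod := by
  rw [← List.prod_hom, List.map_map, add_comm, ← List.map_add_range', List.map_map]
  congr 2
  funext n
  simp [add_comm d, unroll_add_self]

theorem prod_map_unroll_range'_mul (k m : ℕ) :
    ((List.range' (k * d) m).map (unroll d φ x)).prod =
      (⇑φ)^[k] ((List.range' 0 m).map (unroll d φ x)).prod := by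
  induction k with
  | zero => simp
  | succ k ih =>
    rw [Nat.succ_mul, prod_map_unroll_range'_add_self, ih, Function.iterate_succ_apply']

theorem prod_ofFn_iterate (m : ℕ) :
    (List.ofFn fun k : Fin m => (⇑φ)^[k] (List.ofFn x).reverse.prod).prod =
      ((List.range' 0 (m * d)).map (unroll d φ x)).prod := by
  induction m with
  | zero => simp
  | succ m ih =>
    rw [List.ofFn_succ', List.prod_concat]
    simp only [Fin.val_castSucc, Fin.val_last]
    rw [ih, Nat.succ_mul, ← List.range'_append_1, List.map_append, List.prod_append, zero_add,
      prod_map_unroll_range'_mul, map_unroll_range'_zero]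

end Products

section Lengths

open CoxeterSystem

variable {B W : Type*} [Group W] {M : CoxeterMatrix B} (cs : CoxeterSystem M W)
  (d : ℕ) [NeZero d] {φ : W → W} (hφ : ∀ u, cs.length (φ u) = cs.length u) (x : Fin d → W)

theorem sum_range_length_unroll :
    ∑ k ∈ range d, cs.length (unroll d φ x k) = ∑ i, cs.length (x i) := by
  rw [← Fin.sum_univ_eq_sum_range (fun k => cs.length (unroll d φ x k)),
    ← Equiv.sum_comp Fin.revPerm]
  simp only [Fin.revPerm_apply, unroll_val_rev]

include hφ

theorem sum_range_length_unroll_add (a : ℕ) :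
    ∑ k ∈ range d, cs.length (unroll d φ x (a + k)) = ∑ i, cs.length (x i) := by
  have hper : Function.Periodic (fun n => cs.length (unroll d φ x n)) d := fun n => by
    simp only [unroll_add_self, hφ]
  rw [hper.sum_range_add, sum_range_length_unroll]

theorem sum_length_unroll_range'_mul (m : ℕ) :
    (((List.range' 0 (m * d)).map (unroll d φ x)).map cs.length).sum =
      m * ∑ i, cs.length (x i) := by
  induction m with
  | zero => simp
  | succ m ih =>
    rw [Nat.succ_mul, ← List.range'_append_1, List.map_append, List.map_append, List.sum_append,
      ih, zero_add, List.map_map, List.sum_map_range']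
    simp only [Function.comp_apply, sum_range_length_unroll_add cs d hφ, Nat.succ_mul]

theorem sum_sum_length_unroll (m : ℕ) :
    ∑ i : Fin d, (((List.range' i.rev m).map (unroll d φ x)).map cs.length).sum =
      m * ∑ i, cs.length (x i) := by
  simp only [List.map_map, List.sum_map_range', Function.comp_apply]
  rw [← Equiv.sum_comp Fin.revPerm]
  simp only [Fin.revPerm_apply, Fin.rev_rev]
  rw [Fin.sum_univ_eq_sum_range (fun j => ∑ k ∈ range m, cs.length (unroll d φ x (j + k))),
    sum_comm]
  simp only [add_comm _ (_ : ℕ), sum_range_length_unroll_add cs d hφ, sum_const, card_range,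
    smul_eq_mul]

theorem sum_length_prod_unroll_eq_iff (m : ℕ) :
    ∑ i : Fin d, cs.length ((List.range' i.rev m).map (unroll d φ x)).prod =
        m * ∑ i, cs.length (x i) ↔
      ∀ a < d, cs.IsLengthAdditive ((List.range' a m).map (unroll d φ x)) := by
  rw [← sum_sum_length_unroll cs d hφ x,
    sum_eq_sum_iff_of_le fun i _ => cs.length_list_prod_le _]
  simp only [mem_univ, true_implies]
  exact (Fin.rev_surjective.forall (p := fun i : Fin d =>
    cs.IsLengthAdditive ((List.range' i m).map (unroll d φ x)))).symm.trans Fin.forall_iff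

theorem length_prod_unroll_range'_mul_iff :
    (cs.length ((List.range' 0 d).map (unroll d φ x)).prod = ∑ i, cs.length (x i) ∧
      ∀ m, 1 ≤ m → cs.length ((List.range' 0 (m * d)).map (unroll d φ x)).prod =
        m * cs.length ((List.range' 0 d).map (unroll d φ x)).prod) ↔
      ∀ m, 1 ≤ m → cs.IsLengthAdditive ((List.range' 0 (m * d)).map (unroll d φ x)) := by
  simp only [IsLengthAdditive, sum_length_unroll_range'_mul cs d hφ]
  constructor
  · rintro ⟨h₁, h⟩ m hm
    rw [h m hm, h₁]
  · intro h
    have h₁ := h 1 le_rfl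
    rw [one_mul, one_mul] at h₁
    exact ⟨h₁, fun m hm => by rw [h m hm, h₁]⟩

end Lengths

theorem stmt6 {B W : Type*} [Group W] {M : CoxeterMatrix B} (cs : CoxeterSystem M W)
    (φ : W ≃* W) (hφ : ∀ u : W, cs.length (φ u) = cs.length u)
    (d : ℕ) (hd : 1 ≤ d) (x : Fin d → W) :
    (∀ m : ℕ, 1 ≤ m →
        ∑ i, cs.length (((List.ofFn fun k : Fin m => (cyc d ⇑φ)^[(k : ℕ)] x).prod) i) =
          m * ∑ i, cs.length (x i)) ↔
      (cs.length ((List.ofFn x).reverse.prod) = ∑ i, cs.length (x i) ∧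
        ∀ m : ℕ, 1 ≤ m →
          cs.length
              ((List.ofFn fun k : Fin m =>
                (⇑φ)^[(k : ℕ)] ((List.ofFn x).reverse.prod)).prod) =
            m * cs.length ((List.ofFn x).reverse.prod)) := by
  have : NeZero d := ⟨by omega⟩
  simp_rw [list_prod_cyc_iterate_apply, prod_ofFn_iterate, ← map_unroll_range'_zero d φ x,
    length_prod_unroll_range'_mul_iff cs d hφ x,
    ← cs.forall_isLengthAdditive_range'_iff _ (NeZero.pos d)]
  constructor
  · intro h m
    rcases m.eq_zero_or_pos with rfl | hm
    · exact fun _ _ => .nil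
    · exact (sum_length_prod_unroll_eq_iff cs d hφ x m).mp (h m hm)
  · exact fun h m _ => (sum_length_prod_unroll_eq_iff cs d hφ x m).mpr (h m)
end

section
/- Let N ≥ 2. (a) For 0 ≤ j ≤ N−1 let x = (w, λ) with w := s₁s₂⋯s_j ∈ S_N (so w is the cycle mapping a ↦ a+1 for a ≤ j and j+1 ↦ 1; w = id if j = 0) and λ := e_{j+1} ∈ ℤ^N. Then the set of length positive elements for x is LP(x) = { v ∈ S_N : v⁻¹(m) > v⁻¹(j+1) for all m > j+1 }. (b) For 1 ≤ j ≤ N let x = (w, λ) with w := s_{N−1}s_{N−2}⋯s_j ∈ S_N (so w maps j ↦ N and t ↦ t−1 for j < t ≤ N; w = id if j = N) and λ := (1,…,1) − e_j ∈ ℤ^N. Then LP(x) = { v ∈ S_N : v⁻¹(m) < v⁻¹(j) for all m < j }. -/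
/-! The length functional of both elements is negative on exactly one family of roots:
for `ε^{ω₁} s₁⋯s_j` on `e_a − e_{j+1}` with `a > j+1`, and for `ε^{ω_{N−1}} s_{N−1}⋯s_j`
on `e_j − e_b` with `b < j`; on the inversions of `w` the sign `η` exactly cancels the
difference of the `λ`-values. Hence `v` is length positive iff it puts each such pair of
indices in the opposite order, which is the stated condition on `v⁻¹`. -/

/-- The simple transposition of `Fin N` swapping the 0-indexed positions `i` and
`i+1` (the identity if `i + 1 ≥ N`). -/
def simpleT (N : ℕ) (i : ℕ) : Equiv.Perm (Fin N) :=
  if h : i + 1 < N then Equiv.swap ⟨i, by omega⟩ ⟨i + 1, h⟩ else 1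

/-- The length functional of `x = (w, λ)`: the value `ℓ(x, e_a − e_b)`. -/
def ellF {N : ℕ} (w : Equiv.Perm (Fin N)) (lam : Fin N → ℤ) (a b : Fin N) : ℤ :=
  lam a - lam b +
    (if a < b ∧ w b < w a then 1 else if b < a ∧ w a < w b then -1 else 0)

/-- The set of length positive elements for `x = (w, λ)`. -/
def LP {N : ℕ} (w : Equiv.Perm (Fin N)) (lam : Fin N → ℤ) : Set (Equiv.Perm (Fin N)) :=
  {v | ∀ a b : Fin N, a < b → 0 ≤ ellF w lam (v a) (v b)}

section LengthPositive

variable {N : ℕ} {w : Equiv.Perm (Fin N)} {lam : Fin N → ℤ}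

@[simp]
lemma ellF_self (a : Fin N) : ellF w lam a a = 0 := by
  simp [ellF]

lemma mem_LP_iff {v : Equiv.Perm (Fin N)} :
    v ∈ LP w lam ↔ ∀ a b, ellF w lam a b < 0 → v⁻¹ b < v⁻¹ a := by
  constructor
  · intro hv a b hab
    by_contra! hle
    have hne : a ≠ b := by rintro rfl; simp at hab
    have := hv _ _ (hle.lt_of_ne ((Equiv.injective _).ne hne))
    simp only [Equiv.Perm.inv_def, Equiv.apply_symm_apply] at this
    omega
  · intro hv p q hpq
    by_contra! hneg
    exact (hv _ _ hneg).asymm (by simpa using hpq)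

lemma LP_eq_of_ellF_neg_iff_right (c : Fin N) (S : Fin N → Prop)
    (h : ∀ a b, ellF w lam a b < 0 ↔ S a ∧ b = c) :
    LP w lam = {v | ∀ m, S m → v⁻¹ c < v⁻¹ m} := by
  ext v
  simp only [mem_LP_iff, h, and_imp, Set.mem_ofPred_eq]
  exact ⟨fun hv m hm => hv m c hm rfl, fun hv a b ha hb => hb ▸ hv a ha⟩

lemma LP_eq_of_ellF_neg_iff_left (c : Fin N) (S : Fin N → Prop)
    (h : ∀ a b, ellF w lam a b < 0 ↔ a = c ∧ S b) :
    LP w lam = {v | ∀ m, S m → v⁻¹ m < v⁻¹ c} := by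
  ext v
  simp only [mem_LP_iff, h, and_imp, Set.mem_ofPred_eq]
  exact ⟨fun hv m hm => hv c m rfl hm, fun hv a b ha hb => ha ▸ hv b hb⟩

end LengthPositive

lemma coe_simpleT_apply {N i : ℕ} (hi : i + 1 < N) (a : Fin N) :
    (simpleT N i a : ℕ) = if (a : ℕ) = i then i + 1 else if (a : ℕ) = i + 1 then i else a := by
  rw [simpleT, dif_pos hi, Equiv.swap_apply_def]
  split_ifs <;> simp_all [Fin.ext_iff]

lemma coe_prod_simpleT_range_apply {N j : ℕ} (hj : j < N) (a : Fin N) :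
    ((((List.range j).map (simpleT N)).prod) a : ℕ) =
      if (a : ℕ) < j then (a : ℕ) + 1 else if (a : ℕ) = j then 0 else (a : ℕ) := by
  induction j generalizing a with
  | zero => simp
  | succ i ih =>
    rw [List.range_succ, List.map_append, List.prod_append, List.map_singleton,
      List.prod_singleton, Equiv.Perm.mul_apply, ih (by omega), coe_simpleT_apply hj]
    split_ifs <;> omega

lemma coe_prod_simpleT_range_rev_apply {N c : ℕ} (hc : c ≤ N - 1) (a : Fin N) :
    ((((List.range c).map fun u => simpleT N (N - 2 - u)).prod) a : ℕ) =
      if (a : ℕ) < N - 1 - c then (a : ℕ)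
      else if (a : ℕ) = N - 1 - c then N - 1 else (a : ℕ) - 1 := by
  induction c generalizing a with
  | zero =>
    have := a.isLt
    simp only [List.range_zero, List.map_nil, List.prod_nil, Equiv.Perm.one_apply]
    split_ifs <;> omega
  | succ c ih =>
    rw [List.range_succ, List.map_append, List.prod_append, List.map_singleton,
      List.prod_singleton, Equiv.Perm.mul_apply, ih (by omega), coe_simpleT_apply (by omega)]
    split_ifs <;> omega

lemma ellF_cycle_neg_iff {N j : ℕ} (hj : j < N) (a b : Fin N) :
    ellF (((List.range j).map (simpleT N)).prod) (fun a : Fin N => if (a : ℕ) = j then 1 else 0)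
        a b < 0 ↔ j < (a : ℕ) ∧ b = ⟨j, hj⟩ := by
  have hwa := coe_prod_simpleT_range_apply hj a
  have hwb := coe_prod_simpleT_range_apply hj b
  simp only [ellF, Fin.lt_def, Fin.ext_iff] at hwa hwb ⊢
  split_ifs at hwa hwb ⊢ <;> omega

lemma ellF_cycle_rev_neg_iff {N j : ℕ} (hj1 : 1 ≤ j) (hj2 : j ≤ N) (a b : Fin N) :
    ellF (((List.range (N - j)).map fun u => simpleT N (N - 2 - u)).prod)
        (fun a : Fin N => if (a : ℕ) = j - 1 then 0 else 1) a b < 0 ↔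
      a = ⟨j - 1, Nat.sub_one_lt_of_le hj1 hj2⟩ ∧ (b : ℕ) < j - 1 := by
  have hwa := coe_prod_simpleT_range_rev_apply (c := N - j) (by omega) a
  have hwb := coe_prod_simpleT_range_rev_apply (c := N - j) (by omega) b
  simp only [ellF, Fin.lt_def, Fin.ext_iff] at hwa hwb ⊢
  split_ifs at hwa hwb ⊢ <;> omega

theorem stmt9 (N : ℕ) (hN : 2 ≤ N) :
    (∀ j : ℕ, ∀ _hj : j ≤ N - 1,
      LP (((List.range j).map (simpleT N)).prod)
          (fun a : Fin N => if (a : ℕ) = j then 1 else 0) =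
        {v : Equiv.Perm (Fin N) | ∀ m : Fin N, j < (m : ℕ) →
          (v⁻¹ ⟨j, by omega⟩ : Fin N) < v⁻¹ m}) ∧
    (∀ j : ℕ, ∀ _hj1 : 1 ≤ j, ∀ _hj2 : j ≤ N,
      LP (((List.range (N - j)).map fun u => simpleT N (N - 2 - u)).prod)
          (fun a : Fin N => if (a : ℕ) = j - 1 then 0 else 1) =
        {v : Equiv.Perm (Fin N) | ∀ m : Fin N, (m : ℕ) < j - 1 →
          v⁻¹ m < (v⁻¹ ⟨j - 1, by omega⟩ : Fin N)}) := by
  refine ⟨fun j hj => ?_, fun j hj1 hj2 => ?_⟩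
  · exact LP_eq_of_ellF_neg_iff_right _ _ (ellF_cycle_neg_iff (by omega))
  · exact LP_eq_of_ellF_neg_iff_left _ _ (ellF_cycle_rev_neg_iff hj1 hj2)
end

section
/- Let n ≥ 1, let s ∈ ℤ, and let μ ∈ ℤⁿ be weakly decreasing and not s-trivial, i.e. neither μ_a ≥ s for all a nor μ_a ≤ s for all a. Let x = (w, λ) with w ∈ Sₙ, λ ∈ ℤⁿ be μ-permissible, and let ν(x) ∈ ℚⁿ be its Newton vector. If S_{>s}(ν(x)) ≠ S_{>s}(μ), then there exists i ∈ {1,…,n} such that S_{>s}(μ^{(i)}(x)) < S_{>s}(μ); equivalently, the weakly decreasing rearrangement μ' of μ^{(i)}(x), which automatically satisfies μ' ≤ μ in dominance order, is not s-similar to μ, i.e. Σ_a |μ'_a − s| ≠ Σ_a |μ_a − s|. -/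
/-- The vector `μ^{(i)}(x) = λ + 1_{[1..i]} − w⁻¹·1_{[1..i]}` for `x = (w, λ)`. -/
def muI {n : ℕ} (w : Equiv.Perm (Fin n)) (lam : Fin n → ℤ) (i : ℕ) : Fin n → ℤ :=
  fun a => lam a + (if (a : ℕ) < i then 1 else 0) - (if ((w a : Fin n) : ℕ) < i then 1 else 0)

/-- `x = (w, λ)` is `μ`-permissible. -/
def Permissible {n : ℕ} (μ : Fin n → ℤ) (w : Equiv.Perm (Fin n)) (lam : Fin n → ℤ) : Prop :=
  (∑ a, lam a = ∑ a, μ a) ∧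
  ∀ i : ℕ, 1 ≤ i → i ≤ n →
    ∀ (ρ : Fin n → ℤ) (π : Equiv.Perm (Fin n)),
      (∀ a, ρ a = muI w lam i (π a)) → Antitone ρ →
      ∀ j : ℕ, psum ρ j ≤ psum μ j

/-- The orbit of `a` under the cyclic group generated by `w` (as a `Finset`). -/
def orbitF {n : ℕ} (w : Equiv.Perm (Fin n)) (a : Fin n) : Finset (Fin n) :=
  Finset.image (fun k : Fin n => (w ^ (k : ℕ)) a) Finset.univ

/-- The Newton vector `ν(x)` of `x = (w, λ)`:
`ν(x)_a = (1/|O|) Σ_{b ∈ O} λ_b`, where `O` is the `⟨w⟩`-orbit of `a`. -/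
def newton {n : ℕ} (w : Equiv.Perm (Fin n)) (lam : Fin n → ℤ) (a : Fin n) : ℚ :=
  (∑ b ∈ orbitF w a, (lam b : ℚ)) / ((orbitF w a).card : ℚ)

/-- `S_{>s}(v) = Σ_{a : v_a > s} (v_a − s)`. -/
def SGt {n : ℕ} (s : ℚ) (v : Fin n → ℚ) : ℚ :=
  ∑ a ∈ Finset.univ.filter (fun a : Fin n => s < v a), (v a - s)

/-! ### Auxiliary definitions and lemmas -/

/-- Integer version of `S_{>s}`. -/
def SZ {n : ℕ} (s : ℤ) (v : Fin n → ℤ) : ℤ := ∑ a, max (v a - s) 0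

namespace Stmt11Aux

open Finset

variable {n : ℕ}

lemma card_filter_val_lt (n j : ℕ) (hj : j ≤ n) :
    (Finset.univ.filter fun a : Fin n => (a : ℕ) < j).card = j := by
  have himg : ((Finset.univ.filter fun a : Fin n => (a : ℕ) < j).image Fin.val)
      = Finset.range j := by
    ext m
    simp only [Finset.mem_image, Finset.mem_filter, Finset.mem_univ, true_and,
      Finset.mem_range]
    constructor
    · rintro ⟨a, ha, rfl⟩; exact ha
    · intro hm; exact ⟨⟨m, lt_of_lt_of_le hm hj⟩, hm, rfl⟩
  calc (Finset.univ.filter fun a : Fin n => (a : ℕ) < j).card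
      = ((Finset.univ.filter fun a : Fin n => (a : ℕ) < j).image Fin.val).card :=
        (Finset.card_image_of_injective _ Fin.val_injective).symm
    _ = j := by rw [himg, Finset.card_range]

lemma lower_filter_eq {S : Finset (Fin n)}
    (hS : ∀ a b : Fin n, a ≤ b → b ∈ S → a ∈ S) :
    S = Finset.univ.filter (fun a : Fin n => (a : ℕ) < S.card) := by
  ext x
  simp only [Finset.mem_filter, Finset.mem_univ, true_and]
  constructor
  · intro hx
    have hsub : Finset.univ.filter (fun a : Fin n => (a : ℕ) < (x : ℕ) + 1) ⊆ S := by
      intro c hc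
      simp only [Finset.mem_filter, Finset.mem_univ, true_and] at hc
      exact hS c x (by rw [Fin.le_def]; omega) hx
    have hcard := Finset.card_le_card hsub
    rw [card_filter_val_lt n _ (by have := x.isLt; omega)] at hcard
    omega
  · intro hx
    by_contra hxS
    have hsub : S ⊆ Finset.univ.filter (fun a : Fin n => (a : ℕ) < (x : ℕ)) := by
      intro c hc
      simp only [Finset.mem_filter, Finset.mem_univ, true_and]
      by_contra hcx
      exact hxS (hS x c (by rw [Fin.le_def]; omega) hc)
    have hcard := Finset.card_le_card hsub
    rw [card_filter_val_lt n _ (le_of_lt x.isLt)] at hcard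
    omega

lemma SGt_eq_sum_max (s : ℚ) (v : Fin n → ℚ) : SGt s v = ∑ a, max (v a - s) 0 := by
  rw [SGt, Finset.sum_filter]
  apply Finset.sum_congr rfl
  intro a _
  by_cases h : s < v a
  · rw [if_pos h, max_eq_left (by linarith)]
  · rw [if_neg h, max_eq_right (by push_neg at h; linarith)]

lemma SGt_intCast (s : ℤ) (v : Fin n → ℤ) :
    SGt (s : ℚ) (fun a => (v a : ℚ)) = ((SZ s v : ℤ) : ℚ) := by
  rw [SGt_eq_sum_max, SZ]
  push_cast
  rfl

lemma SZ_comp_perm (s : ℤ) (v : Fin n → ℤ) (σ : Equiv.Perm (Fin n)) :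
    SZ s (fun a => v (σ a)) = SZ s v := by
  rw [SZ, SZ]
  exact Equiv.sum_comp σ (fun a => max (v a - s) 0)

lemma SZ_eq_psum_of_antitone (s : ℤ) (ρ : Fin n → ℤ) (hρ : Antitone ρ) :
    ∃ k, k ≤ n ∧ SZ s ρ = psum ρ k - k * s := by
  set S := Finset.univ.filter (fun a : Fin n => s < ρ a) with hSdef
  set k := S.card with hk
  have hkn : k ≤ n := by
    have := Finset.card_filter_le (Finset.univ : Finset (Fin n)) (fun a : Fin n => s < ρ a)
    simpa [hk, hSdef] using this
  refine ⟨k, hkn, ?_⟩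
  have hlow : S = Finset.univ.filter (fun a : Fin n => (a : ℕ) < k) := by
    apply lower_filter_eq
    intro a b hab hb
    simp only [hSdef, Finset.mem_filter, Finset.mem_univ, true_and] at hb ⊢
    exact lt_of_lt_of_le hb (hρ hab)
  have h1 : SZ s ρ = ∑ a ∈ S, (ρ a - s) := by
    rw [SZ, hSdef, Finset.sum_filter]
    apply Finset.sum_congr rfl
    intro a _
    by_cases h : s < ρ a
    · rw [if_pos h, max_eq_left (by omega)]
    · rw [if_neg h, max_eq_right (by omega)]
  rw [h1, hlow, Finset.sum_sub_distrib, Finset.sum_const,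
    card_filter_val_lt n k hkn, psum, nsmul_eq_mul]

lemma psum_le_SZ (s : ℤ) (μ : Fin n → ℤ) (j : ℕ) (hj : j ≤ n) :
    psum μ j - j * s ≤ SZ s μ := by
  have h1 : psum μ j - j * s
      = ∑ a ∈ Finset.univ.filter (fun a : Fin n => (a : ℕ) < j), (μ a - s) := by
    rw [psum, Finset.sum_sub_distrib, Finset.sum_const, card_filter_val_lt n j hj,
      nsmul_eq_mul]
  rw [h1, SZ]
  calc ∑ a ∈ Finset.univ.filter (fun a : Fin n => (a : ℕ) < j), (μ a - s)
      ≤ ∑ a ∈ Finset.univ.filter (fun a : Fin n => (a : ℕ) < j), max (μ a - s) 0 :=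
        Finset.sum_le_sum (fun a _ => le_max_left _ _)
    _ ≤ ∑ a, max (μ a - s) 0 :=
        Finset.sum_le_sum_of_subset_of_nonneg (Finset.filter_subset _ _)
          (fun a _ _ => le_max_right _ _)

lemma SZ_muI_le (s : ℤ) (μ : Fin n → ℤ) (w : Equiv.Perm (Fin n)) (lam : Fin n → ℤ)
    (hperm : Permissible μ w lam) (i : ℕ) (hi1 : 1 ≤ i) (hi2 : i ≤ n) :
    SZ s (muI w lam i) ≤ SZ s μ := by
  set f := muI w lam i with hf
  set σ : Equiv.Perm (Fin n) := Fin.revPerm.trans (Tuple.sort f) with hσ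
  have hanti : Antitone (fun a => f (σ a)) := by
    intro a b hab
    exact Tuple.monotone_sort f (Fin.rev_le_rev.mpr hab)
  obtain ⟨k, hkn, hSZ⟩ := SZ_eq_psum_of_antitone s (fun a => f (σ a)) hanti
  have hp := hperm.2 i hi1 hi2 (fun a => f (σ a)) σ (fun a => rfl) hanti k
  have hμk := psum_le_SZ s μ k hkn
  have hinv : SZ s f = SZ s (fun a => f (σ a)) := (SZ_comp_perm s f σ).symm
  rw [hinv, hSZ]
  omega

/-- The count `g(i)` of heavy right-crossings. -/
def gI {n : ℕ} (w : Equiv.Perm (Fin n)) (lam : Fin n → ℤ) (s : ℤ) (i : ℕ) : ℤ :=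
  ∑ a : Fin n, if (a : ℕ) < i ∧ i ≤ ((w a : Fin n) : ℕ) ∧ s ≤ lam a then 1 else 0

/-- The count `h(i)` of strictly-heavy left-crossings. -/
def hI {n : ℕ} (w : Equiv.Perm (Fin n)) (lam : Fin n → ℤ) (s : ℤ) (i : ℕ) : ℤ :=
  ∑ a : Fin n, if ((w a : Fin n) : ℕ) < i ∧ i ≤ (a : ℕ) ∧ s < lam a then 1 else 0

lemma SZ_muI_eq (s : ℤ) (w : Equiv.Perm (Fin n)) (lam : Fin n → ℤ) (i : ℕ) :
    SZ s (muI w lam i) = SZ s lam + gI w lam s i - hI w lam s i := by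
  have hpt : ∀ a : Fin n,
      max (muI w lam i a - s) 0
        = max (lam a - s) 0
          + (if (a : ℕ) < i ∧ i ≤ ((w a : Fin n) : ℕ) ∧ s ≤ lam a then 1 else 0)
          - (if ((w a : Fin n) : ℕ) < i ∧ i ≤ (a : ℕ) ∧ s < lam a then 1 else 0) := by
    intro a
    simp only [muI]
    split_ifs <;> omega
  calc SZ s (muI w lam i)
      = ∑ a : Fin n, (max (lam a - s) 0
          + (if (a : ℕ) < i ∧ i ≤ ((w a : Fin n) : ℕ) ∧ s ≤ lam a then 1 else 0)
          - (if ((w a : Fin n) : ℕ) < i ∧ i ≤ (a : ℕ) ∧ s < lam a then 1 else 0)) := by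
        rw [SZ]; exact Finset.sum_congr rfl (fun a _ => hpt a)
    _ = SZ s lam + gI w lam s i - hI w lam s i := by
        rw [Finset.sum_sub_distrib, Finset.sum_add_distrib, SZ, gI, hI]

lemma muI_n (w : Equiv.Perm (Fin n)) (lam : Fin n → ℤ) : muI w lam n = lam := by
  funext a
  simp [muI, a.isLt, (w a).isLt]

lemma eq_of_prefix_cards {S T : Finset (Fin n)}
    (h : ∀ i, i ≤ n → (S.filter fun a : Fin n => (a : ℕ) < i).card
      = (T.filter fun a : Fin n => (a : ℕ) < i).card) :
    S = T := by
  have key : ∀ (U : Finset (Fin n)) (x : Fin n),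
      (U.filter fun a : Fin n => (a : ℕ) < (x : ℕ) + 1).card
        = (U.filter fun a : Fin n => (a : ℕ) < (x : ℕ)).card + if x ∈ U then 1 else 0 := by
    intro U x
    have hsplit : (U.filter fun a : Fin n => (a : ℕ) < (x : ℕ) + 1)
        = (U.filter fun a : Fin n => (a : ℕ) < (x : ℕ)) ∪ (U.filter fun a : Fin n => a = x) := by
      rw [← Finset.filter_or]
      apply Finset.filter_congr
      intro a _
      constructor
      · intro ha
        rcases Nat.lt_succ_iff_lt_or_eq.mp ha with h' | h'
        · exact Or.inl h'
        · exact Or.inr (Fin.ext h')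
      · rintro (h' | rfl)
        · omega
        · omega
    have hdisj : Disjoint (U.filter fun a : Fin n => (a : ℕ) < (x : ℕ))
        (U.filter fun a : Fin n => a = x) := by
      rw [Finset.disjoint_left]
      intro a ha ha'
      simp only [Finset.mem_filter] at ha ha'
      rcases ha' with ⟨-, rfl⟩
      omega
    rw [hsplit, Finset.card_union_of_disjoint hdisj, Finset.filter_eq']
    split_ifs <;> simp
  ext x
  have h0 := h (x : ℕ) (le_of_lt x.isLt)
  have h1 := h ((x : ℕ) + 1) x.isLt
  rw [key S x, key T x, h0] at h1
  by_cases hS : x ∈ S <;> by_cases hT : x ∈ T <;>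
    simp only [hS, hT, if_true, if_false] at h1 ⊢ <;> omega

/-- The normalized heavy set `P'`. -/
def SP {n : ℕ} (w : Equiv.Perm (Fin n)) (lam : Fin n → ℤ) (s : ℤ) : Finset (Fin n) :=
  Finset.univ.filter (fun a : Fin n =>
    ((a : ℕ) < ((w a : Fin n) : ℕ) ∧ s ≤ lam a) ∨
    (¬ ((a : ℕ) < ((w a : Fin n) : ℕ)) ∧ s < lam a))

lemma card_as_sum {p : Fin n → Prop} [DecidablePred p] :
    ((Finset.univ.filter p).card : ℤ) = ∑ a : Fin n, if p a then (1 : ℤ) else 0 := by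
  rw [Finset.card_filter]
  push_cast
  apply Finset.sum_congr rfl
  intro a _
  split_ifs <;> simp

lemma prefix_card_SP (w : Equiv.Perm (Fin n)) (lam : Fin n → ℤ) (s : ℤ) (i : ℕ) :
    (((SP w lam s).filter fun a : Fin n => (a : ℕ) < i).card : ℤ)
      = gI w lam s i + ∑ a : Fin n,
        (if ((((a : ℕ) < ((w a : Fin n) : ℕ) ∧ s ≤ lam a) ∨
            (¬ ((a : ℕ) < ((w a : Fin n) : ℕ)) ∧ s < lam a)) ∧
            (a : ℕ) < i ∧ ((w a : Fin n) : ℕ) < i) then (1 : ℤ) else 0) := by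
  rw [SP, Finset.filter_filter, card_as_sum, gI, ← Finset.sum_add_distrib]
  apply Finset.sum_congr rfl
  intro a _
  split_ifs <;> omega

lemma prefix_card_image (w : Equiv.Perm (Fin n)) (lam : Fin n → ℤ) (s : ℤ) (i : ℕ) :
    ((((SP w lam s).image w).filter fun a : Fin n => (a : ℕ) < i).card : ℤ)
      = hI w lam s i + ∑ a : Fin n,
        (if ((((a : ℕ) < ((w a : Fin n) : ℕ) ∧ s ≤ lam a) ∨
            (¬ ((a : ℕ) < ((w a : Fin n) : ℕ)) ∧ s < lam a)) ∧
            (a : ℕ) < i ∧ ((w a : Fin n) : ℕ) < i) then (1 : ℤ) else 0) := by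
  rw [Finset.filter_image, Finset.card_image_of_injective _ w.injective,
    SP, Finset.filter_filter, card_as_sum, hI, ← Finset.sum_add_distrib]
  apply Finset.sum_congr rfl
  intro a _
  split_ifs <;> omega

lemma SP_invariant (w : Equiv.Perm (Fin n)) (lam : Fin n → ℤ) (s : ℤ)
    (hgh : ∀ i, 1 ≤ i → i ≤ n → gI w lam s i = hI w lam s i) :
    (SP w lam s).image w = SP w lam s := by
  symm
  apply eq_of_prefix_cards
  intro i hi
  have hghi : gI w lam s i = hI w lam s i := by
    rcases Nat.eq_zero_or_pos i with rfl | hpos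
    · rw [gI, hI]
      apply Finset.sum_congr rfl
      intro a _
      rw [if_neg (by omega), if_neg (by omega)]
    · exact hgh i hpos hi
  have hZ : (((SP w lam s).filter fun a : Fin n => (a : ℕ) < i).card : ℤ)
      = ((((SP w lam s).image w).filter fun a : Fin n => (a : ℕ) < i).card : ℤ) := by
    rw [prefix_card_SP w lam s i, prefix_card_image w lam s i, hghi]
  exact_mod_cast hZ

/-! ### Orbit lemmas -/

lemma exists_period (w : Equiv.Perm (Fin n)) (a : Fin n) :
    ∃ d, 0 < d ∧ d ≤ n ∧ ∀ q : ℕ, (w ^ (d * q)) a = a := by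
  have hcore : ∀ u v : ℕ, u < v → v ≤ n → (w ^ u) a = (w ^ v) a →
      ∃ d, 0 < d ∧ d ≤ n ∧ ∀ q : ℕ, (w ^ (d * q)) a = a := by
    intro u v huv hvn heq'
    have hfix : (w ^ (v - u)) a = a := by
      have h2 : (w ^ u) ((w ^ (v - u)) a) = (w ^ u) a := by
        rw [← Equiv.Perm.mul_apply, ← pow_add]
        have huvv : u + (v - u) = v := by omega
        rw [huvv, heq']
      exact (Equiv.injective _) h2
    refine ⟨v - u, by omega, by omega, ?_⟩
    intro q
    induction q with
    | zero => simp
    | succ q ih =>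
      rw [Nat.mul_succ, pow_add, Equiv.Perm.mul_apply, hfix]
      exact ih
  have hni : ¬ Function.Injective (fun k : Fin (n + 1) => (w ^ (k : ℕ)) a) := by
    intro hinj
    have := Fintype.card_le_of_injective _ hinj
    simp only [Fintype.card_fin] at this
    omega
  rw [Function.not_injective_iff] at hni
  obtain ⟨x, y, hxy, hne⟩ := hni
  have hvne : (x : ℕ) ≠ (y : ℕ) := fun h => hne (Fin.ext h)
  rcases Nat.lt_or_ge (x : ℕ) (y : ℕ) with h | h
  · exact hcore (x : ℕ) (y : ℕ) h (by have := y.isLt; omega) hxy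
  · exact hcore (y : ℕ) (x : ℕ) (by omega) (by have := x.isLt; omega) hxy.symm

lemma pow_mem_orbitF (w : Equiv.Perm (Fin n)) (a : Fin n) (m : ℕ) :
    (w ^ m) a ∈ orbitF w a := by
  obtain ⟨d, hd0, hdn, hfix⟩ := exists_period w a
  have hmod : (w ^ m) a = (w ^ (m % d)) a := by
    conv_lhs => rw [← Nat.div_add_mod m d]
    rw [Nat.add_comm, pow_add, Equiv.Perm.mul_apply, hfix]
  rw [orbitF, Finset.mem_image]
  exact ⟨⟨m % d, lt_of_lt_of_le (Nat.mod_lt m hd0) hdn⟩, Finset.mem_univ _, hmod.symm⟩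

lemma mem_orbitF_self (w : Equiv.Perm (Fin n)) (a : Fin n) : a ∈ orbitF w a := by
  have := pow_mem_orbitF w a 0
  simpa using this

lemma orbitF_symm {w : Equiv.Perm (Fin n)} {a b : Fin n} (hb : b ∈ orbitF w a) :
    a ∈ orbitF w b := by
  rw [orbitF, Finset.mem_image] at hb
  obtain ⟨k, -, hk⟩ := hb
  obtain ⟨d, hd0, hdn, hfix⟩ := exists_period w a
  have hk' : (k : ℕ) ≤ d * ((k : ℕ) + 1) := by
    calc (k : ℕ) ≤ (k : ℕ) + 1 := by omega
    _ ≤ d * ((k : ℕ) + 1) := Nat.le_mul_of_pos_left _ hd0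
  have hba : (w ^ (d * ((k : ℕ) + 1) - (k : ℕ))) b = a := by
    rw [← hk, ← Equiv.Perm.mul_apply, ← pow_add]
    have heq : d * ((k : ℕ) + 1) - (k : ℕ) + (k : ℕ) = d * ((k : ℕ) + 1) := by omega
    rw [heq, hfix]
  rw [← hba]
  exact pow_mem_orbitF w b _

lemma orbitF_subset {w : Equiv.Perm (Fin n)} {a b : Fin n} (hb : b ∈ orbitF w a) :
    orbitF w b ⊆ orbitF w a := by
  intro x hx
  rw [orbitF, Finset.mem_image] at hx hb
  obtain ⟨j, -, hj⟩ := hx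
  obtain ⟨k, -, hk⟩ := hb
  rw [← hj, ← hk, ← Equiv.Perm.mul_apply, ← pow_add]
  exact pow_mem_orbitF w a _

lemma orbitF_eq {w : Equiv.Perm (Fin n)} {a b : Fin n} (hb : b ∈ orbitF w a) :
    orbitF w a = orbitF w b :=
  subset_antisymm (orbitF_subset (orbitF_symm hb)) (orbitF_subset hb)

lemma pow_mem_SP {w : Equiv.Perm (Fin n)} {lam : Fin n → ℤ} {s : ℤ}
    (hinv : (SP w lam s).image w = SP w lam s) :
    ∀ (m : ℕ) (a : Fin n), a ∈ SP w lam s → (w ^ m) a ∈ SP w lam s := by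
  intro m
  induction m with
  | zero => intro a ha; simpa using ha
  | succ m ih =>
    intro a ha
    have h1 : w a ∈ SP w lam s := by
      rw [← hinv]
      exact Finset.mem_image_of_mem w ha
    rw [pow_succ, Equiv.Perm.mul_apply]
    exact ih (w a) h1

lemma mem_SP_of_gt {w : Equiv.Perm (Fin n)} {lam : Fin n → ℤ} {s : ℤ} {b : Fin n}
    (h : s < lam b) : b ∈ SP w lam s := by
  rw [SP, Finset.mem_filter]
  refine ⟨Finset.mem_univ _, ?_⟩
  by_cases hb : (b : ℕ) < ((w b : Fin n) : ℕ)
  · exact Or.inl ⟨hb, le_of_lt h⟩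
  · exact Or.inr ⟨hb, h⟩

lemma le_of_mem_SP {w : Equiv.Perm (Fin n)} {lam : Fin n → ℤ} {s : ℤ} {c : Fin n}
    (h : c ∈ SP w lam s) : s ≤ lam c := by
  rw [SP, Finset.mem_filter] at h
  rcases h.2 with ⟨-, h'⟩ | ⟨-, h'⟩
  · exact h'
  · exact le_of_lt h'

lemma purity {w : Equiv.Perm (Fin n)} {lam : Fin n → ℤ} {s : ℤ}
    (hinv : (SP w lam s).image w = SP w lam s) {a b c : Fin n}
    (hb : b ∈ orbitF w a) (hbs : s < lam b) (hc : c ∈ orbitF w a) : s ≤ lam c := by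
  have hc' : c ∈ orbitF w b := by
    rw [← orbitF_eq hb]
    exact hc
  rw [orbitF, Finset.mem_image] at hc'
  obtain ⟨k, -, hk⟩ := hc'
  rw [← hk]
  exact le_of_mem_SP (pow_mem_SP hinv (k : ℕ) b (mem_SP_of_gt hbs))

end Stmt11Aux

open Stmt11Aux in
theorem stmt11 (n : ℕ) (hn : 1 ≤ n) (s : ℤ) (μ : Fin n → ℤ) (hμ : Antitone μ)
    (htriv1 : ¬ ∀ a, s ≤ μ a) (htriv2 : ¬ ∀ a, μ a ≤ s)
    (w : Equiv.Perm (Fin n)) (lam : Fin n → ℤ) (hperm : Permissible μ w lam)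
    (hne : SGt (s : ℚ) (fun a => newton w lam a) ≠ SGt (s : ℚ) (fun a => (μ a : ℚ))) :
    ∃ i : ℕ, 1 ≤ i ∧ i ≤ n ∧
      SGt (s : ℚ) (fun a => (muI w lam i a : ℚ)) < SGt (s : ℚ) (fun a => (μ a : ℚ)) := by
  by_contra hcon
  push_neg at hcon
  -- From permissibility and the negated conclusion, S_{>s}(μ^{(i)}) = S_{>s}(μ) for all i.
  have heq : ∀ i, 1 ≤ i → i ≤ n → SZ s (muI w lam i) = SZ s μ := by
    intro i h1 h2
    have hle := SZ_muI_le s μ w lam hperm i h1 h2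
    have hge' := hcon i h1 h2
    rw [SGt_intCast, SGt_intCast] at hge'
    have hge : SZ s μ ≤ SZ s (muI w lam i) := by exact_mod_cast hge'
    omega
  have hlam : SZ s lam = SZ s μ := by
    have := heq n hn le_rfl
    rwa [muI_n] at this
  have hgh : ∀ i, 1 ≤ i → i ≤ n → gI w lam s i = hI w lam s i := by
    intro i h1 h2
    have h3 := SZ_muI_eq s w lam i
    rw [heq i h1 h2, ← hlam] at h3
    omega
  have hinv : (SP w lam s).image w = SP w lam s := SP_invariant w lam s hgh
  -- Newton vector computation
  set m : Fin n → ℚ := fun b => max ((lam b : ℚ) - (s : ℚ)) 0 with hm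
  have hpoint : ∀ a : Fin n, max (newton w lam a - (s : ℚ)) 0
      = (∑ b ∈ orbitF w a, m b) / ((orbitF w a).card : ℚ) := by
    intro a
    have hcard : 0 < (orbitF w a).card := Finset.card_pos.mpr ⟨a, mem_orbitF_self w a⟩
    have hcq : (0 : ℚ) < ((orbitF w a).card : ℚ) := by exact_mod_cast hcard
    by_cases hA : ∃ b ∈ orbitF w a, s < lam b
    · obtain ⟨b, hb, hbs⟩ := hA
      have hall : ∀ c ∈ orbitF w a, s ≤ lam c := fun c hc => purity hinv hb hbs hc
      have hν : (∑ c ∈ orbitF w a, ((lam c : ℚ) - (s : ℚ))) / ((orbitF w a).card : ℚ)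
          = newton w lam a - (s : ℚ) := by
        rw [Finset.sum_sub_distrib, Finset.sum_const, nsmul_eq_mul, sub_div,
          mul_div_cancel_left₀ _ (ne_of_gt hcq), newton]
      have hnum : ∑ c ∈ orbitF w a, ((lam c : ℚ) - (s : ℚ)) = ∑ c ∈ orbitF w a, m c := by
        apply Finset.sum_congr rfl
        intro c hc
        have : (s : ℚ) ≤ (lam c : ℚ) := by exact_mod_cast hall c hc
        exact (max_eq_left (by linarith)).symm
      have hnn : 0 ≤ newton w lam a - (s : ℚ) := by
        rw [← hν]
        apply div_nonneg _ (le_of_lt hcq)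
        apply Finset.sum_nonneg
        intro c hc
        have : (s : ℚ) ≤ (lam c : ℚ) := by exact_mod_cast hall c hc
        linarith
      rw [max_eq_left hnn, ← hν, hnum]
    · push_neg at hA
      have h1 : newton w lam a - (s : ℚ) ≤ 0 := by
        rw [newton, sub_nonpos, div_le_iff₀ hcq]
        calc ∑ b ∈ orbitF w a, (lam b : ℚ)
            ≤ ∑ _b ∈ orbitF w a, (s : ℚ) := by
              apply Finset.sum_le_sum
              intro c hc
              exact_mod_cast hA c hc
          _ = (s : ℚ) * ((orbitF w a).card : ℚ) := by
              rw [Finset.sum_const, nsmul_eq_mul, mul_comm]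
      rw [max_eq_right h1]
      have h2 : ∀ c ∈ orbitF w a, m c = 0 := by
        intro c hc
        have : (lam c : ℚ) ≤ (s : ℚ) := by exact_mod_cast hA c hc
        exact max_eq_right (by linarith)
      rw [Finset.sum_congr rfl h2, Finset.sum_const_zero, zero_div]
  -- Double counting: sum over elements of orbit-averages equals plain sum.
  have hswap : ∑ a : Fin n, (∑ b ∈ orbitF w a, m b) / ((orbitF w a).card : ℚ)
      = ∑ b : Fin n, m b := by
    have step1 : ∀ a : Fin n, (∑ b ∈ orbitF w a, m b) / ((orbitF w a).card : ℚ)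
        = ∑ b : Fin n, (if b ∈ orbitF w a then m b / ((orbitF w a).card : ℚ) else 0) := by
      intro a
      rw [Finset.sum_ite_mem, Finset.univ_inter, Finset.sum_div]
    rw [Finset.sum_congr rfl (fun a _ => step1 a), Finset.sum_comm]
    apply Finset.sum_congr rfl
    intro b _
    have hconv : ∀ a : Fin n,
        (if b ∈ orbitF w a then m b / ((orbitF w a).card : ℚ) else 0)
          = (if a ∈ orbitF w b then m b / ((orbitF w b).card : ℚ) else 0) := by
      intro a
      by_cases hmem : b ∈ orbitF w a
      · rw [if_pos hmem, if_pos (orbitF_symm hmem), orbitF_eq hmem]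
      · rw [if_neg hmem, if_neg (fun h' => hmem (orbitF_symm h'))]
    rw [Finset.sum_congr rfl (fun a _ => hconv a), Finset.sum_ite_mem, Finset.univ_inter,
      Finset.sum_const, nsmul_eq_mul]
    have hcard : 0 < (orbitF w b).card := Finset.card_pos.mpr ⟨b, mem_orbitF_self w b⟩
    have hcq : ((orbitF w b).card : ℚ) ≠ 0 := by
      have : (0 : ℚ) < ((orbitF w b).card : ℚ) := by exact_mod_cast hcard
      exact ne_of_gt this
    rw [mul_comm, div_mul_cancel₀ _ hcq]
  -- Conclusion
  apply hne
  calc SGt (s : ℚ) (fun a => newton w lam a)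
      = ∑ a : Fin n, max (newton w lam a - (s : ℚ)) 0 := SGt_eq_sum_max _ _
    _ = ∑ a : Fin n, (∑ b ∈ orbitF w a, m b) / ((orbitF w a).card : ℚ) :=
        Finset.sum_congr rfl (fun a _ => hpoint a)
    _ = ∑ b : Fin n, m b := hswap
    _ = SGt (s : ℚ) (fun a => (lam a : ℚ)) := (SGt_eq_sum_max _ _).symm
    _ = ((SZ s lam : ℤ) : ℚ) := SGt_intCast s lam
    _ = ((SZ s μ : ℤ) : ℚ) := by rw [hlam]
    _ = SGt (s : ℚ) (fun a => (μ a : ℚ)) := (SGt_intCast s μ).symm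
end

section
/- Let n ≥ 1, s ∈ ℤ, w ∈ Sₙ and λ ∈ ℤⁿ; set x = (w, λ) and form the vectors μ^{(i)}(x) for i ∈ {1,…,n}. Assume that the quantities S_{>s}(μ^{(i)}(x)) and S_{<s}(μ^{(i)}(x)) are independent of i ∈ {1,…,n}. Define D_{>s}(x) := ∪_{i=1}^{n} { a : μ^{(i)}(x)_a > s } and D_{<s}(x) := ∪_{i=1}^{n} { a : μ^{(i)}(x)_a < s }. Then D_{>s}(x) and D_{<s}(x) are disjoint subsets of {1,…,n}, and each of them is stable under the permutation w, i.e. w(D_{>s}(x)) = D_{>s}(x) and w(D_{<s}(x)) = D_{<s}(x). -/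
/-- `S_{>s}(v) = Σ_{a : v_a > s} (v_a − s)`. -/
def SGtZ {n : ℕ} (s : ℤ) (v : Fin n → ℤ) : ℤ :=
  ∑ a ∈ Finset.univ.filter (fun a : Fin n => s < v a), (v a - s)

/-- `S_{<s}(v) = Σ_{a : v_a < s} (s − v_a)`. -/
def SLtZ {n : ℕ} (s : ℤ) (v : Fin n → ℤ) : ℤ :=
  ∑ a ∈ Finset.univ.filter (fun a : Fin n => v a < s), (s - v a)

/-- `D_{>s}(x) = ∪_{i=1}^{n} { a : μ^{(i)}(x)_a > s }`. -/
def DGt {n : ℕ} (s : ℤ) (w : Equiv.Perm (Fin n)) (lam : Fin n → ℤ) : Finset (Fin n) :=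
  (Finset.Icc 1 n).biUnion fun i => Finset.univ.filter fun a => s < muI w lam i a

/-- `D_{<s}(x) = ∪_{i=1}^{n} { a : μ^{(i)}(x)_a < s }`. -/
def DLt {n : ℕ} (s : ℤ) (w : Equiv.Perm (Fin n)) (lam : Fin n → ℤ) : Finset (Fin n) :=
  (Finset.Icc 1 n).biUnion fun i => Finset.univ.filter fun a => muI w lam i a < s

private lemma sgt_eq_sum_max {n : ℕ} (s : ℤ) (v : Fin n → ℤ) :
    SGtZ s v = ∑ a, max (v a - s) 0 := by
  rw [SGtZ, Finset.sum_filter]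
  refine Finset.sum_congr rfl fun a _ => ?_
  split_ifs with h
  · rw [max_eq_left (by omega)]
  · rw [max_eq_right (by omega)]

private lemma muI_step {n : ℕ} (w : Equiv.Perm (Fin n)) (lam : Fin n → ℤ) (c : Fin n) (a : Fin n) :
    muI w lam ((c : ℕ) + 1) a
      = muI w lam (c : ℕ) a + (if a = c then 1 else 0) - (if w a = c then 1 else 0) := by
  simp only [muI, Fin.ext_iff]
  split_ifs <;> omega

private lemma key_iff {n : ℕ} (s : ℤ) (w : Equiv.Perm (Fin n)) (lam : Fin n → ℤ)
    (b : Fin n) (hb : w b ≠ b)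
    (hS : SGtZ s (muI w lam ((w b : ℕ) + 1)) = SGtZ s (muI w lam (w b : ℕ))) :
    (s ≤ muI w lam (w b : ℕ) (w b) ↔ s < muI w lam (w b : ℕ) b) := by
  set c := w b with hc
  set v := muI w lam (c : ℕ) with hv
  have hbc : b ≠ c := fun h => hb (by rw [← h] at hc; exact hc.symm)
  have hceq : ∀ a : Fin n, (w a = c) ↔ a = b := by
    intro a
    constructor
    · intro h; exact w.injective (h.trans hc)
    · intro h; rw [h, ← hc]
  have hstep : ∀ a, muI w lam ((c : ℕ) + 1) a
      = v a + (if a = c then 1 else 0) - (if a = b then 1 else 0) := by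
    intro a
    rw [muI_step w lam c a, hv]
    congr 1
    simp [hceq a]
  rw [sgt_eq_sum_max, sgt_eq_sum_max] at hS
  have hsplit : ∀ f : Fin n → ℤ,
      ∑ a, f a = ∑ a ∈ Finset.univ \ {b, c}, f a + (f b + f c) := by
    intro f
    rw [← Finset.sum_sdiff (Finset.subset_univ ({b, c} : Finset (Fin n))),
      Finset.sum_pair hbc]
  rw [hsplit, hsplit] at hS
  have hrest : ∑ a ∈ Finset.univ \ {b, c}, max (muI w lam ((c : ℕ) + 1) a - s) 0
      = ∑ a ∈ Finset.univ \ {b, c}, max (v a - s) 0 := by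
    refine Finset.sum_congr rfl fun a ha => ?_
    simp only [Finset.mem_sdiff, Finset.mem_insert, Finset.mem_singleton] at ha
    rw [hstep a, if_neg (by tauto), if_neg (by tauto)]
    ring_nf
  rw [hrest] at hS
  have h1 : muI w lam ((c : ℕ) + 1) b = v b - 1 := by
    rw [hstep b, if_neg hbc, if_pos rfl]; ring
  have h2 : muI w lam ((c : ℕ) + 1) c = v c + 1 := by
    rw [hstep c, if_pos rfl, if_neg (Ne.symm hbc)]; ring
  rw [h1, h2] at hS
  rw [max_def, max_def, max_def, max_def] at hS
  split_ifs at hS <;> omega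

private lemma keyP {n : ℕ} (s : ℤ) (w : Equiv.Perm (Fin n)) (lam : Fin n → ℤ)
    (b : Fin n) (hb : w b ≠ b)
    (hk : s ≤ muI w lam (w b : ℕ) (w b) ↔ s < muI w lam (w b : ℕ) b) :
    ((s < lam b ∨ (lam b = s ∧ (b : ℕ) < (w b : ℕ))) ↔
     (s < lam (w b) ∨ (lam (w b) = s ∧ (w b : ℕ) < (w (w b) : ℕ)))) := by
  have hwwb : w (w b) ≠ w b := fun h => hb (w.injective h)
  have hb' : (b : ℕ) ≠ (w b : ℕ) := fun h => hb (Fin.ext h).symm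
  have hw' : ((w (w b)) : ℕ) ≠ ((w b) : ℕ) := fun h => hwwb (Fin.ext h)
  simp only [muI] at hk
  split_ifs at hk <;> omega

private lemma keyQ {n : ℕ} (s : ℤ) (w : Equiv.Perm (Fin n)) (lam : Fin n → ℤ)
    (b : Fin n) (hb : w b ≠ b)
    (hk : s ≤ muI w lam (w b : ℕ) (w b) ↔ s < muI w lam (w b : ℕ) b) :
    ((lam b < s ∨ (lam b = s ∧ (w b : ℕ) < (b : ℕ))) ↔
     (lam (w b) < s ∨ (lam (w b) = s ∧ (w (w b) : ℕ) < (w b : ℕ)))) := by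
  have hwwb : w (w b) ≠ w b := fun h => hb (w.injective h)
  have hb' : (b : ℕ) ≠ (w b : ℕ) := fun h => hb (Fin.ext h).symm
  have hw' : ((w (w b)) : ℕ) ≠ ((w b) : ℕ) := fun h => hwwb (Fin.ext h)
  simp only [muI] at hk
  split_ifs at hk <;> omega

private lemma mem_DGt' {n : ℕ} (hn : 1 ≤ n) (s : ℤ) (w : Equiv.Perm (Fin n))
    (lam : Fin n → ℤ) (a : Fin n) :
    a ∈ DGt s w lam ↔ (s < lam a ∨ (lam a = s ∧ (a : ℕ) < (w a : ℕ))) := by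
  simp only [DGt, Finset.mem_biUnion, Finset.mem_Icc, Finset.mem_filter, Finset.mem_univ,
    true_and]
  constructor
  · rintro ⟨i, ⟨h1, h2⟩, h3⟩
    simp only [muI] at h3
    split_ifs at h3 <;> omega
  · rintro (h | ⟨h1, h2⟩)
    · exact ⟨n, ⟨hn, le_rfl⟩, by simp only [muI, if_pos a.isLt, if_pos (w a).isLt]; omega⟩
    · refine ⟨(a : ℕ) + 1, ⟨by omega, by have := (w a).isLt; omega⟩, ?_⟩
      simp only [muI]
      split_ifs <;> omega

private lemma mem_DLt' {n : ℕ} (hn : 1 ≤ n) (s : ℤ) (w : Equiv.Perm (Fin n))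
    (lam : Fin n → ℤ) (a : Fin n) :
    a ∈ DLt s w lam ↔ (lam a < s ∨ (lam a = s ∧ (w a : ℕ) < (a : ℕ))) := by
  simp only [DLt, Finset.mem_biUnion, Finset.mem_Icc, Finset.mem_filter, Finset.mem_univ,
    true_and]
  constructor
  · rintro ⟨i, ⟨h1, h2⟩, h3⟩
    simp only [muI] at h3
    split_ifs at h3 <;> omega
  · rintro (h | ⟨h1, h2⟩)
    · exact ⟨n, ⟨hn, le_rfl⟩, by simp only [muI, if_pos a.isLt, if_pos (w a).isLt]; omega⟩
    · refine ⟨(w a : ℕ) + 1, ⟨by omega, by have := a.isLt; omega⟩, ?_⟩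
      simp only [muI]
      split_ifs <;> omega

theorem stmt12 (n : ℕ) (hn : 1 ≤ n) (s : ℤ) (w : Equiv.Perm (Fin n)) (lam : Fin n → ℤ)
    (hconst : ∀ i i' : ℕ, 1 ≤ i → i ≤ n → 1 ≤ i' → i' ≤ n →
      SGtZ s (muI w lam i) = SGtZ s (muI w lam i') ∧
      SLtZ s (muI w lam i) = SLtZ s (muI w lam i')) :
    Disjoint (DGt s w lam) (DLt s w lam) ∧
    Finset.image (⇑w) (DGt s w lam) = DGt s w lam ∧
    Finset.image (⇑w) (DLt s w lam) = DLt s w lam := by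
  have hSconst : ∀ i : ℕ, i < n → SGtZ s (muI w lam (i + 1)) = SGtZ s (muI w lam i) := by
    intro i hi
    rcases Nat.eq_zero_or_pos i with rfl | hpos
    · have h0 : muI w lam 0 = muI w lam n := by
        funext a
        simp only [muI, if_pos a.isLt, if_pos (w a).isLt, Nat.not_lt_zero, if_neg,
          if_false]
        omega
      rw [h0]
      exact (hconst 1 n le_rfl hn hn le_rfl).1
    · exact (hconst (i + 1) i (by omega) (by omega) hpos (le_of_lt hi)).1
  have hk : ∀ b : Fin n, w b ≠ b →
      (s ≤ muI w lam (w b : ℕ) (w b) ↔ s < muI w lam (w b : ℕ) b) :=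
    fun b hb => key_iff s w lam b hb (hSconst (w b : ℕ) (w b).isLt)
  have hiffG : ∀ b : Fin n, b ∈ DGt s w lam ↔ w b ∈ DGt s w lam := by
    intro b
    by_cases hb : w b = b
    · rw [hb]
    · rw [mem_DGt' hn, mem_DGt' hn]
      exact keyP s w lam b hb (hk b hb)
  have hiffL : ∀ b : Fin n, b ∈ DLt s w lam ↔ w b ∈ DLt s w lam := by
    intro b
    by_cases hb : w b = b
    · rw [hb]
    · rw [mem_DLt' hn, mem_DLt' hn]
      exact keyQ s w lam b hb (hk b hb)
  refine ⟨?_, ?_, ?_⟩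
  · rw [Finset.disjoint_left]
    intro a h1 h2
    rw [mem_DGt' hn] at h1
    rw [mem_DLt' hn] at h2
    omega
  · ext a
    rw [Finset.mem_image]
    constructor
    · rintro ⟨b, hbmem, rfl⟩
      exact (hiffG b).1 hbmem
    · intro ha
      refine ⟨w.symm a, ?_, w.apply_symm_apply a⟩
      rw [hiffG (w.symm a), w.apply_symm_apply]
      exact ha
  · ext a
    rw [Finset.mem_image]
    constructor
    · rintro ⟨b, hbmem, rfl⟩
      exact (hiffL b).1 hbmem
    · intro ha
      refine ⟨w.symm a, ?_, w.apply_symm_apply a⟩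
      rw [hiffL (w.symm a), w.apply_symm_apply]
      exact ha
end

section
/- Let n ≥ 1, let w be a permutation of {1,…,n}, and let λ ∈ ℚⁿ. Set c := max_a λ_a and E := { a : λ_a = c }. Define ν ∈ ℚⁿ by ν_a := (1/|O|) Σ_{b∈O} λ_b, where O is the orbit of a under the cyclic group generated by w. If the reflection length of w is strictly less than |E|, then there exists an index a with ν_a = c. -/
/-- The reflection length of a permutation: the minimal number of transpositions
whose product is `w`. -/
noncomputable def reflLength {n : ℕ} (w : Equiv.Perm (Fin n)) : ℕ :=
  sInf {k | ∃ l : List (Equiv.Perm (Fin n)),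
    (∀ τ ∈ l, τ.IsSwap) ∧ l.length = k ∧ l.prod = w}

/-- The Newton vector of `w ε^λ`:
`ν_a = (1/|O|) Σ_{b ∈ O} λ_b`, where `O` is the `⟨w⟩`-orbit of `a`. -/
def newtonQ {n : ℕ} (w : Equiv.Perm (Fin n)) (lam : Fin n → ℚ) (a : Fin n) : ℚ :=
  (∑ b ∈ orbitF w a, lam b) / ((orbitF w a).card : ℚ)

/-!
A product of `k` transpositions leaves invariant a nonempty subset of any set `E` with more
than `k` elements: peel off the first transposition `(x y)` and find invariant sets of the
remaining product inside `E \ {x}` and `E \ {y}`; one of them, or their union, contains both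
or neither of `x` and `y`, and is then invariant under the whole product. For
`E = {a | λ a = c}` the `⟨w⟩`-orbit of any point of that invariant set lies in `E`, so the
average `ν` of `λ` over it is `c`.
-/

open Equiv Set

section SwapProducts

variable {α : Type*} [DecidableEq α]

theorem mapsTo_swap {S : Set α} {x y : α} (hxy : x ∈ S ↔ y ∈ S) : MapsTo (swap x y) S S := by
  intro z hz
  rw [swap_apply_def]
  split_ifs with hx hy
  · exact hxy.1 (hx ▸ hz)
  · exact hxy.2 (hy ▸ hz)
  · exact hz

theorem mapsTo_swap_mul {S : Set α} {v : Perm α} {x y : α} (hv : MapsTo v S S)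
    (hxy : x ∈ S ↔ y ∈ S) : MapsTo (swap x y * v) S S := by
  rw [Perm.coe_mul]
  exact (mapsTo_swap hxy).comp hv

theorem exists_nonempty_mapsTo_subset_of_length_lt (l : List (Perm α))
    (hl : ∀ τ ∈ l, τ.IsSwap) (E : Finset α) (hE : l.length < E.card) :
    ∃ S : Set α, S.Nonempty ∧ S ⊆ E ∧ MapsTo l.prod S S := by
  induction l generalizing E with
  | nil =>
    obtain ⟨a, ha⟩ := Finset.card_pos.1 (by simpa using hE)
    exact ⟨{a}, singleton_nonempty a, by simpa using ha, by simp [MapsTo]⟩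
  | cons τ t ih =>
    obtain ⟨x, y, -, rfl⟩ := hl τ List.mem_cons_self
    rw [List.prod_cons]
    have ih_erase (z : α) : ∃ S : Set α, S.Nonempty ∧ S ⊆ E.erase z ∧ MapsTo t.prod S S := by
      refine ih (fun σ hσ => hl σ (List.mem_cons_of_mem _ hσ)) _ ?_
      have := Finset.pred_card_le_card_erase (s := E) (a := z)
      simp only [List.length_cons] at hE
      omega
    have subset_of_erase {S : Set α} {z : α} (h : S ⊆ E.erase z) : S ⊆ E :=
      h.trans (Finset.coe_subset.2 (Finset.erase_subset z E))
    have notMem_of_erase {S : Set α} {z : α} (h : S ⊆ E.erase z) : z ∉ S :=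
      fun hz => Finset.notMem_erase z E (h hz)
    obtain ⟨S₁, hS₁, hS₁E, hS₁t⟩ := ih_erase x
    by_cases hy : y ∈ S₁
    swap
    · exact ⟨S₁, hS₁, subset_of_erase hS₁E,
        mapsTo_swap_mul hS₁t (iff_of_false (notMem_of_erase hS₁E) hy)⟩
    obtain ⟨S₂, hS₂, hS₂E, hS₂t⟩ := ih_erase y
    by_cases hx : x ∈ S₂
    · refine ⟨S₁ ∪ S₂, hS₁.inl, union_subset (subset_of_erase hS₁E) (subset_of_erase hS₂E), ?_⟩
      exact mapsTo_swap_mul (hS₁t.union_union hS₂t) (iff_of_true (.inr hx) (.inl hy))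
    · exact ⟨S₂, hS₂, subset_of_erase hS₂E,
        mapsTo_swap_mul hS₂t (iff_of_false hx (notMem_of_erase hS₂E))⟩

end SwapProducts

theorem exists_swap_factors_length_eq_reflLength {n : ℕ} (w : Perm (Fin n)) :
    ∃ l : List (Perm (Fin n)), (∀ τ ∈ l, τ.IsSwap) ∧ l.length = reflLength w ∧ l.prod = w := by
  obtain ⟨l, hprod, hswap⟩ := w.truncSwapFactors.out
  exact Nat.sInf_mem (s := {k | ∃ l : List (Perm (Fin n)),
    (∀ τ ∈ l, τ.IsSwap) ∧ l.length = k ∧ l.prod = w}) ⟨l.length, l, hswap, rfl, hprod⟩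

section Orbit

variable {n : ℕ} (w : Perm (Fin n))

theorem self_mem_orbitF (a : Fin n) : a ∈ orbitF w a :=
  Finset.mem_image.2 ⟨⟨0, a.pos⟩, Finset.mem_univ _, by simp⟩

theorem orbitF_subset_of_mapsTo {S : Set (Fin n)} (hS : MapsTo w S S) {a : Fin n} (ha : a ∈ S) :
    ↑(orbitF w a) ⊆ S := by
  intro b hb
  obtain ⟨k, -, rfl⟩ := Finset.mem_image.1 hb
  rw [← Perm.iterate_eq_pow]
  exact hS.iterate k ha

theorem newtonQ_eq_of_forall_mem_orbitF {lam : Fin n → ℚ} {a : Fin n} {c : ℚ}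
    (h : ∀ b ∈ orbitF w a, lam b = c) : newtonQ w lam a = c := by
  have hcard : ((orbitF w a).card : ℚ) ≠ 0 :=
    Nat.cast_ne_zero.2 (Finset.card_ne_zero_of_mem (self_mem_orbitF w a))
  rw [newtonQ, Finset.sum_congr rfl h, Finset.sum_const, nsmul_eq_mul, mul_div_cancel_left₀ c hcard]

end Orbit

theorem stmt14_general (n : ℕ) (w : Equiv.Perm (Fin n)) (lam : Fin n → ℚ)
    (c : ℚ)
    (hlt : reflLength w < (Finset.univ.filter fun a : Fin n => lam a = c).card) :
    ∃ a : Fin n, newtonQ w lam a = c := by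
  obtain ⟨l, hswap, hlen, rfl⟩ := exists_swap_factors_length_eq_reflLength w
  obtain ⟨S, ⟨a, ha⟩, hSE, hS⟩ :=
    exists_nonempty_mapsTo_subset_of_length_lt l hswap _ (hlen ▸ hlt)
  refine ⟨a, newtonQ_eq_of_forall_mem_orbitF _ fun b hb => ?_⟩
  simpa using hSE (orbitF_subset_of_mapsTo _ hS ha hb)

theorem stmt14 (n : ℕ) (hn : 1 ≤ n) (w : Equiv.Perm (Fin n)) (lam : Fin n → ℚ)
    (c : ℚ) (hc : IsGreatest (Set.range lam) c)
    (hlt : reflLength w < (Finset.univ.filter fun a : Fin n => lam a = c).card) :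
    ∃ a : Fin n, newtonQ w lam a = c :=
  stmt14_general n w lam c hlt
end
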